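/- arXiv:2509.14529 — 4 statements merged into one kernel-verified Lean document; each statement's English description precedes it below -/
import Mathlib

section
/- Gaussian expectation flow identity (equation (30) in the proof of Theorem 4.2): Let T > 0 and let v : [0,T] → [0,∞) be nondecreasing and continuous. Let F : [0,T] × ℝ → ℝ be bounded and continuous, and assume that the partial derivatives ∂_tF, ∂_xF and ∂_x²F exist, are continuous, and are bounded on [0,T] × ℝ. Then for all 0 ≤ s ≤ t ≤ T: ∫_ℝ F(t,x) d(gaussianReal 0 v(t))(x) − ∫_ℝ F(s,x) d(gaussianReal 0 v(s))(x) = ∫_s^t ( ∫_ℝ ∂_uF(u,x) d(gaussianReal 0 v(u))(x) ) du + (1/2) · ∫_{(s,t]} ( ∫_ℝ ∂_x²F(u,x) d(gaussianReal 0 v(u))(x) ) dμ_v(u). -/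
/-!
Write `Φ(a, u) = 𝔼[F(u, √a Z)]` for a standard Gaussian `Z`. Differentiating under the integral
gives `∂ᵤΦ(a, u) = 𝔼[∂ᵤF(u, √a Z)]`, and differentiating `F(u, √a z)` in `a` followed by Gaussian
integration by parts `𝔼[Z g(Z)] = 𝔼[g'(Z)]` gives the heat equation
`∂ₐΦ(a, u) = ½ 𝔼[∂ₓ²F(u, √a Z)]`. The identity is then a chain rule for `u ↦ Φ(v u, u)` against
`du + dμ_v`: both partial derivatives are uniformly continuous on a compact rectangle, so over a
short interval `[a, b]` the increment of `Φ(v u, u)` differs from the two integrals by at most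
`ε ((b - a) + (v b - v a))`, and these errors add up to `ε ((t - s) + (v t - v s))` over `[s, t]`.
-/

open MeasureTheory ProbabilityTheory Real Set Filter Function
open scoped ENNReal Topology

theorem continuous_of_continuousOn_uncurry {X : Type*} [TopologicalSpace X] {G : X → ℝ → ℝ}
    {S : Set X} (hG : ContinuousOn (uncurry G) (S ×ˢ univ)) {p : X} (hp : p ∈ S) :
    Continuous (G p) :=
  hG.comp_continuous (continuous_const.prodMk continuous_id) fun _ => ⟨hp, trivial⟩

theorem gaussianReal_map_sqrt_mul (a : ℝ) :
    (gaussianReal 0 1).map (√a * ·) = gaussianReal 0 a.toNNReal := by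
  rw [gaussianReal_map_const_mul, mul_zero, mul_one]
  congr
  rcases le_total 0 a with h | h
  · simp [Real.sq_sqrt h, h]
  · simp [Real.sqrt_eq_zero'.2 h, h]

theorem integral_gaussianReal_eq_integral_sqrt_mul (a : ℝ) {f : ℝ → ℝ}
    (hf : AEStronglyMeasurable f (gaussianReal 0 a.toNNReal)) :
    ∫ x, f x ∂gaussianReal 0 a.toNNReal = ∫ z, f (√a * z) ∂gaussianReal 0 1 := by
  -- no sign condition on `a`: for `a ≤ 0` both sides are `f 0`
  rw [← gaussianReal_map_sqrt_mul] at hf ⊢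
  exact integral_map (by fun_prop) hf

theorem continuousOn_integral_gaussianReal {X : Type*} [TopologicalSpace X]
    [FirstCountableTopology X]
    {G : X → ℝ → ℝ} {σ : X → ℝ} {S : Set X} {M : ℝ}
    (hG : ContinuousOn (uncurry G) (S ×ˢ univ)) (hσ : ContinuousOn σ S)
    (hGb : ∀ p ∈ S, ∀ x, |G p x| ≤ M) :
    ContinuousOn (fun p => ∫ x, G p x ∂gaussianReal 0 (σ p).toNNReal) S := by
  have hslice : ∀ p ∈ S, Continuous (G p) := fun _ hp => continuous_of_continuousOn_uncurry hG hp
  refine (continuousOn_of_dominated (F := fun p z => G p (√(σ p) * z)) (bound := fun _ => M)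
    (fun p hp => ((hslice p hp).comp (continuous_const_mul _)).aestronglyMeasurable)
    (fun p hp => ae_of_all _ fun z => hGb p hp _) (integrable_const M)
    (ae_of_all _ fun z => hG.comp (continuousOn_id.prodMk
      ((continuous_sqrt.comp_continuousOn hσ).mul continuousOn_const)) fun p hp => ⟨hp, trivial⟩)
    ).congr fun p hp =>
      integral_gaussianReal_eq_integral_sqrt_mul _ (hslice p hp).aestronglyMeasurable

theorem continuousOn_uncurry_integral_gaussianReal {G : ℝ → ℝ → ℝ} {S : Set ℝ} {M : ℝ}
    (hG : ContinuousOn (uncurry G) (S ×ˢ univ)) (hGb : ∀ u ∈ S, ∀ x, |G u x| ≤ M) :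
    ContinuousOn (uncurry fun (a : ℝ) u => ∫ x, G u x ∂gaussianReal 0 a.toNNReal) (univ ×ˢ S) :=
  continuousOn_integral_gaussianReal (G := fun p : ℝ × ℝ => G p.2)
    (hG.comp (continuous_fst.snd.prodMk continuous_snd).continuousOn
      fun _ hp => ⟨hp.1.2, trivial⟩) continuousOn_fst fun p hp => hGb p.2 hp.2

theorem hasDerivAt_gaussianPDFReal_zero_one (z : ℝ) :
    HasDerivAt (gaussianPDFReal 0 1) (-z * gaussianPDFReal 0 1 z) z := by
  have h : HasDerivAt (fun x => (√(2 * π))⁻¹ * rexp (-x ^ 2 / 2))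
      ((√(2 * π))⁻¹ * (rexp (-z ^ 2 / 2) * (-z))) z :=
    (((hasDerivAt_pow 2 z).fun_neg.div_const 2).exp.const_mul _).congr_deriv (by ring)
  convert h using 1
  · ext x
    simp [gaussianPDFReal]
  · simp [gaussianPDFReal]
    ring

theorem integral_mul_gaussianReal_eq_integral_deriv {g g' : ℝ → ℝ} {K K' : ℝ}
    (hg : ∀ z, HasDerivAt g (g' z) z) (hgb : ∀ z, |g z| ≤ K) (hg'b : ∀ z, |g' z| ≤ K') :
    ∫ z, z * g z ∂gaussianReal 0 1 = ∫ z, g' z ∂gaussianReal 0 1 := by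
  set φ := gaussianPDFReal 0 1
  have hg_meas : AEStronglyMeasurable g volume :=
    (continuous_iff_continuousAt.2 fun z => (hg z).continuousAt).aestronglyMeasurable
  have hg'_meas : AEStronglyMeasurable g' volume :=
    ((funext fun z => (hg z).deriv) ▸ measurable_deriv g).aestronglyMeasurable
  have hφ : Integrable φ := integrable_gaussianPDFReal 0 1
  have hzφ : Integrable fun z => -z * φ z := by
    refine (((integrable_mul_exp_neg_mul_sq (b := 1 / 2) (by norm_num)).const_mul
      (-(√(2 * π))⁻¹))).congr (ae_of_all _ fun z => ?_)
    simp [φ, gaussianPDFReal]; ring_nf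
  have hibp := integral_mul_deriv_eq_deriv_mul_of_integrable (fun z _ => hg z)
    (fun z _ => hasDerivAt_gaussianPDFReal_zero_one z)
    (hzφ.bdd_mul hg_meas (ae_of_all _ hgb)) (hφ.bdd_mul hg'_meas (ae_of_all _ hg'b))
    (hφ.bdd_mul hg_meas (ae_of_all _ hgb))
  simp only [integral_gaussianReal_eq_integral_smul one_ne_zero, smul_eq_mul]
  calc ∫ z, φ z * (z * g z) = -∫ z, g z * (-z * φ z) := by
        rw [← integral_neg]; congr 1; ext z; ring
    _ = ∫ z, φ z * g' z := by rw [hibp, neg_neg]; congr 1; ext z; ring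

theorem hasDerivAt_integral_gaussianReal_variance {f f' f'' : ℝ → ℝ} {M : ℝ}
    (hf : ∀ x, HasDerivAt f (f' x) x) (hf' : ∀ x, HasDerivAt f' (f'' x) x)
    (hfb : ∀ x, |f x| ≤ M) (hf'b : ∀ x, |f' x| ≤ M) (hf''b : ∀ x, |f'' x| ≤ M)
    {a : ℝ} (ha : 0 < a) :
    HasDerivAt (fun c => ∫ x, f x ∂gaussianReal 0 c.toNNReal)
      ((1 / 2) * ∫ x, f'' x ∂gaussianReal 0 a.toNNReal) a := by
  have hf_cont : Continuous f := continuous_iff_continuousAt.2 fun x => (hf x).continuousAt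
  have hf'_cont : Continuous f' := continuous_iff_continuousAt.2 fun x => (hf' x).continuousAt
  have hf''_meas : Measurable f'' := (funext fun x => (hf' x).deriv) ▸ measurable_deriv f'
  simp_rw [integral_gaussianReal_eq_integral_sqrt_mul _ hf_cont.aestronglyMeasurable,
    integral_gaussianReal_eq_integral_sqrt_mul _ hf''_meas.aestronglyMeasurable]
  -- `d/dc f (√c z) = f' (√c z) z / (2 √c)`, dominated on `c > a / 2` by a multiple of `|z|`
  have key := hasDerivAt_integral_of_dominated_loc_of_deriv_le (μ := gaussianReal 0 1)
    (F := fun c z => f (√c * z)) (F' := fun c z => f' (√c * z) * (z / (2 * √c)))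
    (bound := fun z => M / (2 * √(a / 2)) * |z|) (Ioi_mem_nhds (half_lt_self ha))
    (Eventually.of_forall fun c => (hf_cont.comp (continuous_const_mul _)).aestronglyMeasurable)
    ((integrable_const M).mono' (hf_cont.comp (continuous_const_mul _)).aestronglyMeasurable
      (ae_of_all _ fun z => hfb _))
    ((hf'_cont.comp (continuous_const_mul _)).mul
      (continuous_id.div_const _)).aestronglyMeasurable
    (ae_of_all _ fun z c hc => ?_)
    (((memLp_id_gaussianReal 1).integrable le_rfl).abs.const_mul _)
    (ae_of_all _ fun z c hc =>
      ((hf _).comp c ((hasDerivAt_sqrt ((half_pos ha).trans hc).ne').mul_const z)).congr_deriv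
        (by ring))
  · refine key.2.congr_deriv ?_
    have hstein := integral_mul_gaussianReal_eq_integral_deriv (g := fun z => f' (√a * z))
      (g' := fun z => √a * f'' (√a * z)) (K' := √a * M)
      (fun z => ((hf' _).comp z ((hasDerivAt_id z).const_mul √a)).congr_deriv (by simp; ring))
      (fun z => hf'b _)
      (fun z => by rw [abs_mul, abs_of_pos (sqrt_pos.2 ha)]; gcongr; exact hf''b _)
    calc ∫ z, f' (√a * z) * (z / (2 * √a)) ∂gaussianReal 0 1
        = 1 / (2 * √a) * ∫ z, √a * f'' (√a * z) ∂gaussianReal 0 1 := by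
          rw [← hstein, ← integral_const_mul]; congr 1; ext z; ring
      _ = (1 / 2) * ∫ z, f'' (√a * z) ∂gaussianReal 0 1 := by
          rw [integral_const_mul]; field_simp
  · have hc' : √(a / 2) ≤ √c := sqrt_le_sqrt hc.le
    have hc0 : 0 < √c := (sqrt_pos.2 (half_pos ha)).trans_le hc'
    have hM : 0 ≤ M := (abs_nonneg _).trans (hf'b 0)
    rw [norm_mul, norm_div, Real.norm_eq_abs, Real.norm_eq_abs, Real.norm_eq_abs,
      abs_of_pos (by positivity : (0 : ℝ) < 2 * √c)]
    calc |f' (√c * z)| * (|z| / (2 * √c)) ≤ M * (|z| / (2 * √(a / 2))) := by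
          gcongr
          exact hf'b _
      _ = M / (2 * √(a / 2)) * |z| := by ring

theorem integral_gaussianReal_sub_eq_intervalIntegral {f f' f'' : ℝ → ℝ} {M : ℝ}
    (hf : ∀ x, HasDerivAt f (f' x) x) (hf' : ∀ x, HasDerivAt f' (f'' x) x)
    (hf''c : Continuous f'')
    (hfb : ∀ x, |f x| ≤ M) (hf'b : ∀ x, |f' x| ≤ M) (hf''b : ∀ x, |f'' x| ≤ M)
    {a₁ a₂ : ℝ} (ha₁ : 0 ≤ a₁) (ha : a₁ ≤ a₂) :
    ∫ x, f x ∂gaussianReal 0 a₂.toNNReal - ∫ x, f x ∂gaussianReal 0 a₁.toNNReal =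
      ∫ c in a₁..a₂, (1 / 2) * ∫ x, f'' x ∂gaussianReal 0 c.toNNReal := by
  have hcont : ∀ h : ℝ → ℝ, Continuous h → (∀ x, |h x| ≤ M) →
      Continuous fun c : ℝ => ∫ x, h x ∂gaussianReal 0 c.toNNReal := fun h hc hb =>
    continuousOn_univ.1 (continuousOn_integral_gaussianReal (G := fun _ => h)
      (hc.comp continuous_snd).continuousOn continuousOn_id fun _ _ => hb)
  exact (intervalIntegral.integral_eq_sub_of_hasDeriv_right_of_le ha
    (hcont f (continuous_iff_continuousAt.2 fun x => (hf x).continuousAt) hfb).continuousOn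
    (fun c hc => (hasDerivAt_integral_gaussianReal_variance hf hf' hfb hf'b hf''b
      (ha₁.trans_lt hc.1)).hasDerivWithinAt)
    ((continuous_const.mul (hcont f'' hf''c hf''b)).intervalIntegrable _ _)).symm

theorem integral_sub_integral_eq_intervalIntegral {α : Type*} [MeasurableSpace α]
    {ν : Measure α} [IsFiniteMeasure ν] {F F' : ℝ → α → ℝ} {a b M : ℝ} (hab : a ≤ b)
    (hF : ∀ u ∈ Icc a b, ∀ x, HasDerivWithinAt (F · x) (F' u x) (Icc a b) u)
    (hFm : ∀ u ∈ Icc a b, AEStronglyMeasurable (F u) ν)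
    (hF'm : ∀ u ∈ Icc a b, AEStronglyMeasurable (F' u) ν)
    (hFb : ∀ u ∈ Icc a b, ∀ x, |F u x| ≤ M) (hF'b : ∀ u ∈ Icc a b, ∀ x, |F' u x| ≤ M)
    (hF'int : IntervalIntegrable (fun u => ∫ x, F' u x ∂ν) volume a b) :
    ∫ x, F b x ∂ν - ∫ x, F a x ∂ν = ∫ u in a..b, ∫ x, F' u x ∂ν := by
  refine (intervalIntegral.integral_eq_sub_of_hasDeriv_right_of_le hab
    (continuousOn_of_dominated hFm (fun u hu => ae_of_all _ (hFb u hu)) (integrable_const M)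
      (ae_of_all _ fun x u hu => (hF u hu x).continuousWithinAt))
    (fun u hu => ?_) hF'int).symm
  have hnhds : Ioo a b ∈ 𝓝 u := Ioo_mem_nhds hu.1 hu.2
  exact (hasDerivAt_integral_of_dominated_loc_of_deriv_le hnhds
    (eventually_of_mem hnhds fun c hc => hFm c (Ioo_subset_Icc_self hc))
    ((integrable_const M).mono' (hFm u (Ioo_subset_Icc_self hu))
      (ae_of_all _ (hFb u (Ioo_subset_Icc_self hu))))
    (hF'm u (Ioo_subset_Icc_self hu))
    (ae_of_all _ fun x c hc => hF'b c (Ioo_subset_Icc_self hc) x) (integrable_const M)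
    (ae_of_all _ fun x c hc =>
      (hF c (Ioo_subset_Icc_self hc) x).hasDerivAt (Icc_mem_nhds hc.1 hc.2))).2.hasDerivWithinAt

theorem abs_sub_le_mul_sub_of_local {f W : ℝ → ℝ} {s t C δ : ℝ}
    (hloc : ∀ a b, s ≤ a → a ≤ b → b ≤ t → b - a ≤ δ → |f b - f a| ≤ C * (W b - W a))
    (n : ℕ) {a b : ℝ} (ha : s ≤ a) (hab : a ≤ b) (hb : b ≤ t) (hba : b - a ≤ n * δ) :
    |f b - f a| ≤ C * (W b - W a) := by
  induction n generalizing b with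
  | zero =>
    obtain rfl : a = b := by simp at hba; linarith
    simp
  | succ n ih =>
    push_cast at hba
    have hn : (0 : ℝ) < n + 1 := by positivity
    -- the last of `n + 1` equal steps from `a` to `b` starts at `m`
    set m := a + (b - a) * n / (n + 1)
    have ham : a ≤ m := le_add_of_nonneg_right (by positivity)
    have hmb : m ≤ b := by
      have : (b - a) * n / (n + 1) ≤ b - a := by
        rw [div_le_iff₀ hn]; nlinarith
      linarith
    have hm_step : b - m ≤ δ := by
      have : b - m = (b - a) / (n + 1) := by simp only [m]; field_simp; ring
      rw [this, div_le_iff₀ hn]; linarith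
    have hm_rest : m - a ≤ n * δ := by
      have : m - a = (b - a) * n / (n + 1) := by ring
      rw [this, div_le_iff₀ hn]; nlinarith [(Nat.cast_nonneg n : (0 : ℝ) ≤ n)]
    calc |f b - f a| ≤ |f b - f m| + |f m - f a| := abs_sub_le _ _ _
      _ ≤ C * (W b - W m) + C * (W m - W a) :=
        add_le_add (hloc m b (ha.trans ham) hmb hb hm_step) (ih ham (hmb.trans hb) hm_rest)
      _ = C * (W b - W a) := by ring

theorem eq_of_forall_abs_sub_le_mul_sub {f W : ℝ → ℝ} {s t : ℝ} (hst : s ≤ t)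
    (hW : MonotoneOn W (Icc s t))
    (h : ∀ ε > 0, ∃ δ > 0, ∀ a b, s ≤ a → a ≤ b → b ≤ t → b - a ≤ δ →
      |f b - f a| ≤ ε * (W b - W a)) :
    f t = f s := by
  have hbound : ∀ ε > 0, |f t - f s| ≤ ε * (W t - W s) := by
    intro ε hε
    obtain ⟨δ, hδ, hloc⟩ := h ε hε
    obtain ⟨n, hn⟩ := exists_nat_gt ((t - s) / δ)
    exact abs_sub_le_mul_sub_of_local hloc n le_rfl hst le_rfl
      (by rw [div_lt_iff₀ hδ] at hn; linarith)
  have hW_st : 0 ≤ W t - W s := sub_nonneg.2 (hW ⟨le_rfl, hst⟩ ⟨hst, le_rfl⟩ hst)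
  refine eq_of_forall_dist_le fun ε hε => ?_
  calc dist (f t) (f s) ≤ ε / (W t - W s + 1) * (W t - W s) := hbound _ (by positivity)
    _ ≤ ε := by
      rw [div_mul_eq_mul_div, div_le_iff₀ (by positivity)]
      nlinarith

theorem abs_intervalIntegral_sub_le {f g : ℝ → ℝ} {a b ε : ℝ} (hab : a ≤ b)
    (hf : IntervalIntegrable f volume a b) (hg : IntervalIntegrable g volume a b)
    (h : ∀ x ∈ Ioc a b, |f x - g x| ≤ ε) :
    |(∫ x in a..b, f x) - ∫ x in a..b, g x| ≤ ε * (b - a) := by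
  rw [← intervalIntegral.integral_sub hf hg, ← abs_of_nonneg (sub_nonneg.2 hab)]
  exact intervalIntegral.norm_integral_le_of_norm_le_const (f := fun x => f x - g x)
    fun x hx => h x (uIoc_of_le hab ▸ hx)

theorem abs_setIntegral_sub_const_le {μ : Measure ℝ} {f : ℝ → ℝ} {S : Set ℝ} {c ε : ℝ}
    (hS : μ S < ∞) (hf : IntegrableOn f S μ) (h : ∀ x ∈ S, |f x - c| ≤ ε) :
    |(∫ x in S, f x ∂μ) - μ.real S * c| ≤ ε * μ.real S := by
  rw [← smul_eq_mul, ← setIntegral_const, ← integral_sub hf (integrableOn_const hS.ne)]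
  exact norm_setIntegral_le_of_norm_le_const (f := fun x => f x - c) hS h

theorem ContinuousOn.integrableOn_Ioc_of_ne_top {μ : Measure ℝ} {g : ℝ → ℝ} {a b : ℝ}
    (hg : ContinuousOn g (Icc a b)) (hμ : μ (Ioc a b) ≠ ∞) : IntegrableOn g (Ioc a b) μ := by
  obtain ⟨C, hC⟩ := isCompact_Icc.exists_bound_of_continuousOn hg
  have : IsFiniteMeasure (μ.restrict (Ioc a b)) :=
    ⟨by rw [Measure.restrict_apply_univ]; exact hμ.lt_top⟩
  exact Integrable.of_bound ((hg.mono Ioc_subset_Icc_self).aestronglyMeasurable measurableSet_Ioc)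
    C (ae_restrict_of_forall_mem measurableSet_Ioc fun r hr => hC r (Ioc_subset_Icc_self hr))

theorem abs_chain_rule_defect_le {Φ Θ Ψ : ℝ → ℝ → ℝ} {v : ℝ → ℝ} {μ : Measure ℝ} {a b ε : ℝ}
    (hab : a ≤ b) (hv : MonotoneOn v (Icc a b)) (hvc : ContinuousOn v (Icc a b))
    (hμ : μ (Ioc a b) = ENNReal.ofReal (v b - v a))
    (hΘ : ContinuousOn (uncurry Θ) (Icc (v a) (v b) ×ˢ Icc a b))
    (hΨ : ContinuousOn (uncurry Ψ) (Icc (v a) (v b) ×ˢ Icc a b))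
    (hΘε : ∀ p ∈ Icc (v a) (v b) ×ˢ Icc a b, ∀ q ∈ Icc (v a) (v b) ×ˢ Icc a b,
      |uncurry Θ p - uncurry Θ q| ≤ ε)
    (hΨε : ∀ p ∈ Icc (v a) (v b) ×ˢ Icc a b, ∀ q ∈ Icc (v a) (v b) ×ˢ Icc a b,
      |uncurry Ψ p - uncurry Ψ q| ≤ ε)
    (htime : Φ (v b) b - Φ (v b) a = ∫ r in a..b, Θ (v b) r)
    (hvar : Φ (v b) a - Φ (v a) a = ∫ c in v a..v b, Ψ c a) :
    |Φ (v b) b - Φ (v a) a - (∫ r in a..b, Θ (v r) r) - ∫ r in Ioc a b, Ψ (v r) r ∂μ|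
      ≤ ε * (b - a) + 2 * ε * (v b - v a) := by
  have ha : a ∈ Icc a b := left_mem_Icc.2 hab
  have hb : b ∈ Icc a b := right_mem_Icc.2 hab
  have hvab : v a ≤ v b := hv ha hb hab
  have hvR : ∀ r ∈ Icc a b, (v r, r) ∈ Icc (v a) (v b) ×ˢ Icc a b :=
    fun r hr => ⟨⟨hv ha hr hr.1, hv hr hb hr.2⟩, hr⟩
  have hμ_real : μ.real (Ioc a b) = v b - v a := by
    rw [measureReal_def, hμ, ENNReal.toReal_ofReal (sub_nonneg.2 hvab)]
  -- by `htime`, `hvar` and `μ (a, b] = v b - v a`, the defect is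
  -- `∫ (Θ (v b) r - Θ (v r) r) dr + ∫ (Ψ c a - Ψ (v a) a) dc - ∫ (Ψ (v r) r - Ψ (v a) a) dμ`
  have h_time := abs_intervalIntegral_sub_le (f := fun r => Θ (v b) r) (g := fun r => Θ (v r) r)
    hab
    ((hΘ.comp (continuousOn_const.prodMk continuousOn_id) fun r hr =>
      ⟨(hvR b hb).1, hr⟩).intervalIntegrable_of_Icc hab)
    ((hΘ.comp (hvc.prodMk continuousOn_id) hvR).intervalIntegrable_of_Icc hab)
    fun r hr => hΘε (v b, r) ⟨(hvR b hb).1, Ioc_subset_Icc_self hr⟩ _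
      (hvR r (Ioc_subset_Icc_self hr))
  have h_var := abs_intervalIntegral_sub_le (f := fun c => Ψ c a) (g := fun _ => Ψ (v a) a) hvab
    ((hΨ.comp (continuousOn_id.prodMk continuousOn_const) fun c hc =>
      ⟨hc, ha⟩).intervalIntegrable_of_Icc hvab) intervalIntegrable_const
    fun c hc => hΨε (c, a) ⟨Ioc_subset_Icc_self hc, ha⟩ _ (hvR a ha)
  have h_meas := abs_setIntegral_sub_const_le (f := fun r => Ψ (v r) r) (c := Ψ (v a) a)
    (hμ ▸ ENNReal.ofReal_lt_top)
    ((hΨ.comp (hvc.prodMk continuousOn_id) hvR).integrableOn_Ioc_of_ne_top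
      (hμ ▸ ENNReal.ofReal_ne_top))
    fun r hr => hΨε _ (hvR r (Ioc_subset_Icc_self hr)) _ (hvR a ha)
  rw [intervalIntegral.integral_const, smul_eq_mul] at h_var
  rw [hμ_real] at h_meas
  rw [abs_le] at h_time h_var h_meas ⊢
  constructor <;> linarith

theorem exists_forall_abs_chain_rule_defect_le {Φ Θ Ψ : ℝ → ℝ → ℝ} {v : ℝ → ℝ}
    {μ : Measure ℝ} {s t : ℝ} (hv : MonotoneOn v (Icc s t)) (hvc : ContinuousOn v (Icc s t))
    (hμ : ∀ a b, s ≤ a → a ≤ b → b ≤ t → μ (Ioc a b) = ENNReal.ofReal (v b - v a))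
    (hΘ : ContinuousOn (uncurry Θ) (Icc (v s) (v t) ×ˢ Icc s t))
    (hΨ : ContinuousOn (uncurry Ψ) (Icc (v s) (v t) ×ˢ Icc s t))
    (htime : ∀ a ∈ Icc (v s) (v t), ∀ u₁ u₂, s ≤ u₁ → u₁ ≤ u₂ → u₂ ≤ t →
      Φ a u₂ - Φ a u₁ = ∫ r in u₁..u₂, Θ a r)
    (hvar : ∀ u ∈ Icc s t, ∀ a₁ a₂, v s ≤ a₁ → a₁ ≤ a₂ → a₂ ≤ v t →
      Φ a₂ u - Φ a₁ u = ∫ c in a₁..a₂, Ψ c u) :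
    ∀ ε > 0, ∃ δ > 0, ∀ a b, s ≤ a → a ≤ b → b ≤ t → b - a ≤ δ →
      |Φ (v b) b - Φ (v a) a - (∫ r in a..b, Θ (v r) r) - ∫ r in Ioc a b, Ψ (v r) r ∂μ|
        ≤ ε * (b - a) + 2 * ε * (v b - v a) := by
  intro ε hε
  have hK : IsCompact (Icc (v s) (v t) ×ˢ Icc s t) := isCompact_Icc.prod isCompact_Icc
  obtain ⟨δΘ, hδΘ, hΘδ⟩ := Metric.uniformContinuousOn_iff_le.1
    (hK.uniformContinuousOn_of_continuous hΘ) ε hε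
  obtain ⟨δΨ, hδΨ, hΨδ⟩ := Metric.uniformContinuousOn_iff_le.1
    (hK.uniformContinuousOn_of_continuous hΨ) ε hε
  obtain ⟨δv, hδv, hvδ⟩ := Metric.uniformContinuousOn_iff_le.1
    (isCompact_Icc.uniformContinuousOn_of_continuous hvc) (min δΘ δΨ) (lt_min hδΘ hδΨ)
  refine ⟨min δv (min δΘ δΨ), lt_min hδv (lt_min hδΘ hδΨ), fun a b ha hab hb hba => ?_⟩
  have hIcc : Icc a b ⊆ Icc s t := Icc_subset_Icc ha hb
  have haI : a ∈ Icc s t := hIcc (left_mem_Icc.2 hab)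
  have hbI : b ∈ Icc s t := hIcc (right_mem_Icc.2 hab)
  have hst : s ≤ t := haI.1.trans haI.2
  have hvs : v s ≤ v a := hv (left_mem_Icc.2 hst) haI ha
  have hvt : v b ≤ v t := hv hbI (right_mem_Icc.2 hst) hb
  set R := Icc (v a) (v b) ×ˢ Icc a b
  have hRK : R ⊆ Icc (v s) (v t) ×ˢ Icc s t := prod_mono (Icc_subset_Icc hvs hvt) hIcc
  have hR : ∀ p ∈ R, ∀ q ∈ R, dist p q ≤ min δΘ δΨ := by
    intro p hp q hq
    have hv_ab : dist (v b) (v a) ≤ min δΘ δΨ := hvδ b hbI a haI <| by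
      rw [Real.dist_eq, abs_of_nonneg (sub_nonneg.2 hab)]; exact hba.trans (min_le_left _ _)
    rw [Prod.dist_eq]
    refine max_le ((Real.dist_le_of_mem_Icc hp.1 hq.1).trans ((le_abs_self _).trans hv_ab))
      ((Real.dist_le_of_mem_Icc hp.2 hq.2).trans (hba.trans (min_le_right _ _)))
  exact abs_chain_rule_defect_le hab (hv.mono hIcc) (hvc.mono hIcc) (hμ a b ha hab hb)
    (hΘ.mono hRK) (hΨ.mono hRK)
    (fun p hp q hq => hΘδ p (hRK hp) q (hRK hq) ((hR p hp q hq).trans (min_le_left _ _)))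
    (fun p hp q hq => hΨδ p (hRK hp) q (hRK hq) ((hR p hp q hq).trans (min_le_right _ _)))
    (htime _ ⟨hvs.trans (hv haI hbI hab), hvt⟩ a b ha hab hb)
    (hvar a haI _ _ hvs (hv haI hbI hab) hvt)

theorem chain_rule_stieltjes {Φ Θ Ψ : ℝ → ℝ → ℝ} {v : ℝ → ℝ} {μ : Measure ℝ} {s t : ℝ}
    (hst : s ≤ t) (hv : MonotoneOn v (Icc s t)) (hvc : ContinuousOn v (Icc s t))
    (hμ : ∀ a b, s ≤ a → a ≤ b → b ≤ t → μ (Ioc a b) = ENNReal.ofReal (v b - v a))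
    (hΘ : ContinuousOn (uncurry Θ) (Icc (v s) (v t) ×ˢ Icc s t))
    (hΨ : ContinuousOn (uncurry Ψ) (Icc (v s) (v t) ×ˢ Icc s t))
    (htime : ∀ a ∈ Icc (v s) (v t), ∀ u₁ u₂, s ≤ u₁ → u₁ ≤ u₂ → u₂ ≤ t →
      Φ a u₂ - Φ a u₁ = ∫ r in u₁..u₂, Θ a r)
    (hvar : ∀ u ∈ Icc s t, ∀ a₁ a₂, v s ≤ a₁ → a₁ ≤ a₂ → a₂ ≤ v t →
      Φ a₂ u - Φ a₁ u = ∫ c in a₁..a₂, Ψ c u) :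
    Φ (v t) t - Φ (v s) s = (∫ r in s..t, Θ (v r) r) + ∫ r in Ioc s t, Ψ (v r) r ∂μ := by
  have hvK : ∀ r ∈ Icc s t, (v r, r) ∈ Icc (v s) (v t) ×ˢ Icc s t := fun r hr =>
    ⟨⟨hv ⟨le_rfl, hst⟩ hr hr.1, hv hr ⟨hst, le_rfl⟩ hr.2⟩, hr⟩
  have hΘv_int : ∀ u ∈ Icc s t, IntervalIntegrable (fun r => Θ (v r) r) volume s u :=
    fun u hu => ((hΘ.comp (hvc.prodMk continuousOn_id) hvK).mono
      (Icc_subset_Icc_right hu.2)).intervalIntegrable_of_Icc hu.1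
  have hΨv_int : ∀ u ∈ Icc s t, IntervalIntegrable (fun r => Ψ (v r) r) μ s u :=
    fun u hu => (intervalIntegrable_iff_integrableOn_Ioc_of_le hu.1).2
      (((hΨ.comp (hvc.prodMk continuousOn_id) hvK).mono
        (Icc_subset_Icc_right hu.2)).integrableOn_Ioc_of_ne_top
          (by rw [hμ s u le_rfl hu.1 hu.2]; exact ENNReal.ofReal_ne_top))
  set f := fun u => Φ (v u) u - (∫ r in s..u, Θ (v r) r) - ∫ r in s..u, Ψ (v r) r ∂μ
  have hf_sub : ∀ a b, s ≤ a → a ≤ b → b ≤ t → f b - f a =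
      Φ (v b) b - Φ (v a) a - (∫ r in a..b, Θ (v r) r) - ∫ r in Ioc a b, Ψ (v r) r ∂μ := by
    intro a b ha hab hb
    have hΘ_sub := intervalIntegral.integral_interval_sub_left
      (hΘv_int b ⟨ha.trans hab, hb⟩) (hΘv_int a ⟨ha, hab.trans hb⟩)
    have hΨ_sub := intervalIntegral.integral_interval_sub_left
      (hΨv_int b ⟨ha.trans hab, hb⟩) (hΨv_int a ⟨ha, hab.trans hb⟩)
    rw [intervalIntegral.integral_of_le hab] at hΨ_sub
    simp only [f]
    linarith
  have hf : f t = f s := by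
    refine eq_of_forall_abs_sub_le_mul_sub (W := fun u => u + 2 * v u) hst
      (fun a ha b hb hab => by linarith [hv ha hb hab]) fun ε hε => ?_
    obtain ⟨δ, hδ, hdefect⟩ :=
      exists_forall_abs_chain_rule_defect_le hv hvc hμ hΘ hΨ htime hvar ε hε
    exact ⟨δ, hδ, fun a b ha hab hb hba => by
      rw [hf_sub a b ha hab hb]; exact (hdefect a b ha hab hb hba).trans_eq (by ring)⟩
  simp only [f, intervalIntegral.integral_same, sub_zero,
    intervalIntegral.integral_of_le hst (μ := μ)] at hf
  linarith

theorem gaussian_expectation_flow_general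
    (T : ℝ)
    (v : ℝ → ℝ) (hv0 : ∀ t ∈ Set.Icc (0 : ℝ) T, 0 ≤ v t)
    (hvmono : MonotoneOn v (Set.Icc (0 : ℝ) T))
    (hvcont : ContinuousOn v (Set.Icc (0 : ℝ) T))
    (μ : Measure ℝ)
    (hμ : ∀ a b : ℝ, 0 ≤ a → a ≤ b → b ≤ T →
      μ (Set.Ioc a b) = ENNReal.ofReal (v b - v a))
    (F Ft Fx Fxx : ℝ → ℝ → ℝ)
    (hFt : ∀ t ∈ Set.Icc (0 : ℝ) T, ∀ x : ℝ,
      HasDerivWithinAt (fun u => F u x) (Ft t x) (Set.Icc 0 T) t)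
    (hFx : ∀ t ∈ Set.Icc (0 : ℝ) T, ∀ x : ℝ,
      HasDerivAt (fun y => F t y) (Fx t x) x)
    (hFxx : ∀ t ∈ Set.Icc (0 : ℝ) T, ∀ x : ℝ,
      HasDerivAt (fun y => Fx t y) (Fxx t x) x)
    (hFtc : ContinuousOn (fun p : ℝ × ℝ => Ft p.1 p.2) (Set.Icc (0 : ℝ) T ×ˢ Set.univ))
    (hFxxc : ContinuousOn (fun p : ℝ × ℝ => Fxx p.1 p.2) (Set.Icc (0 : ℝ) T ×ˢ Set.univ))
    (M : ℝ)
    (hbd : ∀ t ∈ Set.Icc (0 : ℝ) T, ∀ x : ℝ,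
      |F t x| ≤ M ∧ |Ft t x| ≤ M ∧ |Fx t x| ≤ M ∧ |Fxx t x| ≤ M) :
    ∀ s t : ℝ, 0 ≤ s → s ≤ t → t ≤ T →
      (∫ x, F t x ∂(gaussianReal 0 (v t).toNNReal))
          - (∫ x, F s x ∂(gaussianReal 0 (v s).toNNReal))
        = (∫ u in s..t, (∫ x, Ft u x ∂(gaussianReal 0 (v u).toNNReal)))
          + (1 / 2) * ∫ u in Set.Ioc s t,
              (∫ x, Fxx u x ∂(gaussianReal 0 (v u).toNNReal)) ∂μ := by
  intro s t hs hst ht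
  have hsT : Icc s t ⊆ Icc 0 T := Icc_subset_Icc hs ht
  have hK : Icc (v s) (v t) ×ˢ Icc s t ⊆ univ ×ˢ Icc 0 T := prod_mono (subset_univ _) hsT
  have hΘ := (continuousOn_uncurry_integral_gaussianReal hFtc
    fun u hu x => (hbd u hu x).2.1).mono hK
  have hΨ := (continuousOn_uncurry_integral_gaussianReal hFxxc
    fun u hu x => (hbd u hu x).2.2.2).mono hK
  rw [← integral_const_mul]
  refine chain_rule_stieltjes (Φ := fun a u => ∫ x, F u x ∂gaussianReal 0 a.toNNReal)
    (Ψ := fun a u => 1 / 2 * ∫ x, Fxx u x ∂gaussianReal 0 a.toNNReal) hst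
    (hvmono.mono hsT) (hvcont.mono hsT)
    (fun a b ha hab hb => hμ a b (hs.trans ha) hab (hb.trans ht)) hΘ (continuousOn_const.mul hΨ) (fun a ha u₁ u₂ h₁ h₁₂ h₂ => ?_) (fun u hu a₁ a₂ h₁ h₁₂ h₂ => ?_)
  · have hsub : Icc u₁ u₂ ⊆ Icc 0 T := Icc_subset_Icc (hs.trans h₁) (h₂.trans ht)
    exact integral_sub_integral_eq_intervalIntegral h₁₂
      (fun u hu x => (hFt u (hsub hu) x).mono hsub)
      (fun u hu => (continuous_iff_continuousAt.2 fun x =>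
        (hFx u (hsub hu) x).continuousAt).aestronglyMeasurable)
      (fun u hu => (continuous_of_continuousOn_uncurry hFtc (hsub hu)).aestronglyMeasurable)
      (fun u hu x => (hbd u (hsub hu) x).1) (fun u hu x => (hbd u (hsub hu) x).2.1)
      (ContinuousOn.intervalIntegrable_of_Icc h₁₂ (hΘ.comp
        (continuousOn_const.prodMk continuousOn_id) fun r hr => ⟨ha, Icc_subset_Icc h₁ h₂ hr⟩))
  · exact integral_gaussianReal_sub_eq_intervalIntegral (hFx u (hsT hu)) (hFxx u (hsT hu))
      (continuous_of_continuousOn_uncurry hFxxc (hsT hu)) (fun x => (hbd u (hsT hu) x).1)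
      (fun x => (hbd u (hsT hu) x).2.2.1) (fun x => (hbd u (hsT hu) x).2.2.2)
      ((hv0 s ⟨hs, hst.trans ht⟩).trans h₁) h₁₂

/-- Gaussian expectation flow identity.  For a nondecreasing,
nonnegative, continuous variance function `v` on `[0,T]` with Lebesgue–Stieltjes
measure `μ` (i.e. `μ((a,b]) = v(b) − v(a)`), and a bounded continuous
`F : [0,T] × ℝ → ℝ` with bounded continuous partial derivatives `∂_t F`,
`∂_x F`, `∂_x² F`, one has
`∫ F(t,·) dN(0,v(t)) − ∫ F(s,·) dN(0,v(s))
  = ∫_s^t (∫ ∂_u F(u,·) dN(0,v(u))) du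
    + (1/2) ∫_{(s,t]} (∫ ∂_x² F(u,·) dN(0,v(u))) dμ(u)`. -/
theorem gaussian_expectation_flow
    (T : ℝ) (hT : 0 < T)
    (v : ℝ → ℝ) (hv0 : ∀ t ∈ Set.Icc (0 : ℝ) T, 0 ≤ v t)
    (hvmono : MonotoneOn v (Set.Icc (0 : ℝ) T))
    (hvcont : ContinuousOn v (Set.Icc (0 : ℝ) T))
    (μ : Measure ℝ)
    (hμ : ∀ a b : ℝ, 0 ≤ a → a ≤ b → b ≤ T →
      μ (Set.Ioc a b) = ENNReal.ofReal (v b - v a))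
    (F Ft Fx Fxx : ℝ → ℝ → ℝ)
    (hFt : ∀ t ∈ Set.Icc (0 : ℝ) T, ∀ x : ℝ,
      HasDerivWithinAt (fun u => F u x) (Ft t x) (Set.Icc 0 T) t)
    (hFx : ∀ t ∈ Set.Icc (0 : ℝ) T, ∀ x : ℝ,
      HasDerivAt (fun y => F t y) (Fx t x) x)
    (hFxx : ∀ t ∈ Set.Icc (0 : ℝ) T, ∀ x : ℝ,
      HasDerivAt (fun y => Fx t y) (Fxx t x) x)
    (hFc : ContinuousOn (fun p : ℝ × ℝ => F p.1 p.2) (Set.Icc (0 : ℝ) T ×ˢ Set.univ))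
    (hFtc : ContinuousOn (fun p : ℝ × ℝ => Ft p.1 p.2) (Set.Icc (0 : ℝ) T ×ˢ Set.univ))
    (hFxc : ContinuousOn (fun p : ℝ × ℝ => Fx p.1 p.2) (Set.Icc (0 : ℝ) T ×ˢ Set.univ))
    (hFxxc : ContinuousOn (fun p : ℝ × ℝ => Fxx p.1 p.2) (Set.Icc (0 : ℝ) T ×ˢ Set.univ))
    (M : ℝ)
    (hbd : ∀ t ∈ Set.Icc (0 : ℝ) T, ∀ x : ℝ,
      |F t x| ≤ M ∧ |Ft t x| ≤ M ∧ |Fx t x| ≤ M ∧ |Fxx t x| ≤ M) :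
    ∀ s t : ℝ, 0 ≤ s → s ≤ t → t ≤ T →
      (∫ x, F t x ∂(gaussianReal 0 (v t).toNNReal))
          - (∫ x, F s x ∂(gaussianReal 0 (v s).toNNReal))
        = (∫ u in s..t, (∫ x, Ft u x ∂(gaussianReal 0 (v u).toNNReal)))
          + (1 / 2) * ∫ u in Set.Ioc s t,
              (∫ x, Fxx u x ∂(gaussianReal 0 (v u).toNNReal)) ∂μ :=
  gaussian_expectation_flow_general T v hv0 hvmono hvcont μ hμ F Ft Fx Fxx hFt hFx hFxx hFtc hFxxc M
    hbd
end

section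
/- Polynomial Gaussian expectation flow (analytic content of Theorem 4.3): Let T > 0 and let v : [0,T] → [0,∞) be nondecreasing and continuous. Then for every real polynomial Q and all 0 ≤ s ≤ t ≤ T: ∫_ℝ Q(x) d(gaussianReal 0 v(t))(x) − ∫_ℝ Q(x) d(gaussianReal 0 v(s))(x) = (1/2) · ∫_{(s,t]} ( ∫_ℝ Q''(x) d(gaussianReal 0 v(u))(x) ) dμ_v(u), where Q'' is the second derivative of Q; all the integrals appearing are finite since polynomials are integrable against Gaussian measures. -/
/-!
Write `M_n(w) = ∫ xⁿ d𝒩(0, w)`. Gaussian integration by parts (the density satisfies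
`φ' = -(x / w) φ`) gives `M_{n+2}(w) = (n + 1) w M_n(w)`, so `M_{2k}(w) = (2k - 1)‼ wᵏ` and the odd
moments vanish. Hence `w ↦ ∫ Q d𝒩(0, w)` is a polynomial in `w` satisfying the heat equation
`∂_w ∫ Q d𝒩(0, w) = ½ ∫ Q'' d𝒩(0, w)` on `w ≥ 0`, checked monomial by monomial. Finally, for a
continuous nondecreasing `v`, the push-forward of `μ_v` restricted to `(s, t]` under `v` is
Lebesgue measure on `(v s, v t]`, which turns the `dμ_v(u)` integral into a `dw` integral.
-/

open MeasureTheory ProbabilityTheory Set Polynomial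
open scoped NNReal Nat

namespace GaussianFlow

lemma integrable_pow_gaussianReal (m : ℝ) (w : ℝ≥0) (n : ℕ) :
    Integrable (fun x ↦ x ^ n) (gaussianReal m w) :=
  integrable_pow_of_mem_interior_integrableExpSet (by simp) n

lemma integrable_gaussianPDFReal_mul_pow (m : ℝ) {w : ℝ≥0} (hw : w ≠ 0) (n : ℕ) :
    Integrable (fun x ↦ gaussianPDFReal m w x * x ^ n) := by
  have h := integrable_pow_gaussianReal m w n
  rw [gaussianReal_of_var_ne_zero _ hw, integrable_withDensity_iff_integrable_smul'
    (measurable_gaussianPDF _ _) (ae_of_all _ fun _ ↦ gaussianPDF_lt_top)] at h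
  simpa using h

lemma hasDerivAt_gaussianPDFReal (m : ℝ) (w : ℝ≥0) (x : ℝ) :
    HasDerivAt (gaussianPDFReal m w) (-((x - m) / w) * gaussianPDFReal m w x) x := by
  have hexponent : HasDerivAt (fun y ↦ -(y - m) ^ 2 / (2 * (w : ℝ))) (-((x - m) / w)) x :=
    ((((hasDerivAt_id' x).sub_const m).fun_pow 2).fun_neg.div_const (2 * (w : ℝ))).congr_deriv
      (by ring)
  exact (hexponent.exp.const_mul (√(2 * Real.pi * w))⁻¹).congr_deriv
    (by rw [gaussianPDFReal]; ring)

-- Gaussian integration by parts (Stein's identity) applied to `x ^ (n + 1)`.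
lemma integral_pow_add_two_gaussianReal (w : ℝ≥0) (n : ℕ) :
    ∫ x, x ^ (n + 2) ∂gaussianReal 0 w = (n + 1) * w * ∫ x, x ^ n ∂gaussianReal 0 w := by
  rcases eq_or_ne w 0 with rfl | hw
  · simp
  simp only [integral_gaussianReal_eq_integral_smul hw, smul_eq_mul]
  have hint := integrable_gaussianPDFReal_mul_pow 0 hw
  have hparts := integral_mul_deriv_eq_deriv_mul_of_integrable
    (u := fun x ↦ x ^ (n + 1)) (u' := fun x ↦ (n + 1) * x ^ n)
    (fun x _ ↦ by simpa using hasDerivAt_pow (n + 1) x)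
    (fun x _ ↦ hasDerivAt_gaussianPDFReal 0 w x)
    (((hint (n + 2)).const_mul (-(w : ℝ)⁻¹)).congr (ae_of_all _ fun x ↦ by simp; ring))
    (((hint n).const_mul (n + 1)).congr (ae_of_all _ fun x ↦ by simp; ring))
    ((hint (n + 1)).congr (ae_of_all _ fun x ↦ by simp; ring))
  have hlhs : ∫ x, gaussianPDFReal 0 w x * x ^ (n + 2)
      = -w * ∫ x, x ^ (n + 1) * (-((x - 0) / w) * gaussianPDFReal 0 w x) := by
    rw [← integral_const_mul]
    congr 1 with x
    field_simp
    ring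
  have hrhs : ∫ x, (n + 1 : ℝ) * x ^ n * gaussianPDFReal 0 w x
      = (n + 1) * ∫ x, gaussianPDFReal 0 w x * x ^ n := by
    rw [← integral_const_mul]
    congr 1 with x
    ring
  rw [hlhs, hparts, hrhs]
  ring

lemma integral_pow_odd_gaussianReal (w : ℝ≥0) (k : ℕ) :
    ∫ x, x ^ (2 * k + 1) ∂gaussianReal 0 w = 0 := by
  induction k with
  | zero => simp
  | succ k ih => rw [show 2 * (k + 1) + 1 = 2 * k + 1 + 2 by ring,
      integral_pow_add_two_gaussianReal, ih, mul_zero]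

lemma integral_pow_even_gaussianReal (w : ℝ≥0) (k : ℕ) :
    ∫ x, x ^ (2 * k) ∂gaussianReal 0 w = (2 * k - 1)‼ * (w : ℝ) ^ k := by
  induction k with
  | zero => simp
  | succ k ih =>
    rw [show 2 * (k + 1) = 2 * k + 2 by ring, integral_pow_add_two_gaussianReal, ih,
      show 2 * k + 2 - 1 = 2 * k + 1 by omega, Nat.doubleFactorial_add_one]
    push_cast
    ring

lemma continuous_integral_pow_gaussianReal (n : ℕ) :
    Continuous fun a : ℝ ↦ ∫ x, x ^ n ∂gaussianReal 0 a.toNNReal := by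
  obtain ⟨k, rfl | rfl⟩ := Nat.even_or_odd' n
  · simp only [integral_pow_even_gaussianReal]
    fun_prop
  · simp only [integral_pow_odd_gaussianReal]
    exact continuous_const

lemma integral_pow_add_two_gaussianReal_sub {a b : ℝ} (ha : 0 ≤ a) (hab : a ≤ b) (n : ℕ) :
    ∫ x, x ^ (n + 2) ∂gaussianReal 0 b.toNNReal - ∫ x, x ^ (n + 2) ∂gaussianReal 0 a.toNNReal
      = (n + 2) * (n + 1) / 2 * ∫ u in Ioc a b, ∫ x, x ^ n ∂gaussianReal 0 u.toNNReal := by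
  obtain ⟨k, rfl | rfl⟩ := Nat.even_or_odd' n
  · have hmoment : EqOn (fun u : ℝ ↦ ∫ x, x ^ (2 * k) ∂gaussianReal 0 u.toNNReal)
        (fun u ↦ (2 * k - 1)‼ * u ^ k) (Ioc a b) := fun u hu ↦ by
      simp [integral_pow_even_gaussianReal, Real.coe_toNNReal u (ha.trans hu.1.le)]
    rw [setIntegral_congr_fun measurableSet_Ioc hmoment, integral_const_mul,
      ← intervalIntegral.integral_of_le hab, integral_pow, show 2 * k + 2 = 2 * (k + 1) by ring,
      integral_pow_even_gaussianReal, integral_pow_even_gaussianReal,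
      Real.coe_toNNReal a ha, Real.coe_toNNReal b (ha.trans hab),
      show 2 * (k + 1) - 1 = 2 * k + 1 by omega, Nat.doubleFactorial_add_one]
    push_cast
    field_simp
  · simp [show 2 * k + 1 + 2 = 2 * (k + 1) + 1 by ring, integral_pow_odd_gaussianReal]

lemma integrable_eval_gaussianReal (m : ℝ) (w : ℝ≥0) (Q : ℝ[X]) :
    Integrable (fun x ↦ Q.eval x) (gaussianReal m w) := by
  induction Q using Polynomial.induction_on' with
  | add p q hp hq => simpa using hp.fun_add hq
  | monomial n c => simpa using (integrable_pow_gaussianReal m w n).const_mul c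

lemma integral_eval_add_gaussianReal (m : ℝ) (w : ℝ≥0) (p q : ℝ[X]) :
    ∫ x, (p + q).eval x ∂gaussianReal m w
      = ∫ x, p.eval x ∂gaussianReal m w + ∫ x, q.eval x ∂gaussianReal m w := by
  simpa using integral_add (integrable_eval_gaussianReal m w p) (integrable_eval_gaussianReal m w q)

lemma continuous_integral_eval_gaussianReal (Q : ℝ[X]) :
    Continuous fun a : ℝ ↦ ∫ x, Q.eval x ∂gaussianReal 0 a.toNNReal := by
  induction Q using Polynomial.induction_on' with
  | add p q hp hq => simpa only [integral_eval_add_gaussianReal] using hp.fun_add hq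
  | monomial n c =>
    simpa [integral_const_mul] using (continuous_integral_pow_gaussianReal n).const_mul c

lemma integral_eval_gaussianReal_sub (Q : ℝ[X]) {a b : ℝ} (ha : 0 ≤ a) (hab : a ≤ b) :
    ∫ x, Q.eval x ∂gaussianReal 0 b.toNNReal - ∫ x, Q.eval x ∂gaussianReal 0 a.toNNReal
      = 1 / 2 * ∫ u in Ioc a b,
          ∫ x, (derivative (derivative Q)).eval x ∂gaussianReal 0 u.toNNReal := by
  induction Q using Polynomial.induction_on' with
  | add p q hp hq =>
    simp only [derivative_add, integral_eval_add_gaussianReal]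
    rw [integral_add (continuous_integral_eval_gaussianReal _).integrableOn_Ioc
      (continuous_integral_eval_gaussianReal _).integrableOn_Ioc]
    linear_combination hp + hq
  | monomial n c =>
    simp only [derivative_monomial, eval_monomial, integral_const_mul]
    rcases n with _ | _ | n
    · simp
    · simp
    · simp only [Nat.add_sub_cancel, ← mul_sub, integral_pow_add_two_gaussianReal_sub ha hab]
      push_cast
      ring

section StieltjesPushforward

variable {v : ℝ → ℝ} {s t : ℝ}

lemma exists_Ioc_inter_preimage_Iic_eq (hst : s ≤ t) (hmono : MonotoneOn v (Icc s t))
    (hcont : ContinuousOn v (Icc s t)) {r : ℝ} (hr : v s ≤ r) :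
    ∃ b ∈ Icc s t, Ioc s t ∩ v ⁻¹' Iic r = Ioc s b ∧ v b = min r (v t) := by
  set S := Icc s t ∩ v ⁻¹' Iic r
  have hsS : s ∈ S := ⟨left_mem_Icc.2 hst, hr⟩
  have hSbdd : BddAbove S := ⟨t, fun u hu ↦ hu.1.2⟩
  have hbS : sSup S ∈ S :=
    (hcont.preimage_isClosed_of_isClosed isClosed_Icc isClosed_Iic).csSup_mem ⟨s, hsS⟩ hSbdd
  have hle_sSup {u : ℝ} (hu : u ∈ S) : u ≤ sSup S := le_csSup hSbdd hu
  refine ⟨sSup S, hbS.1, ?_, ?_⟩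
  · ext u
    refine ⟨fun ⟨hu, hvu⟩ ↦ ⟨hu.1, hle_sSup ⟨Ioc_subset_Icc_self hu, hvu⟩⟩, fun hu ↦ ?_⟩
    have hu' : u ∈ Icc s t := ⟨hu.1.le, hu.2.trans hbS.1.2⟩
    exact ⟨⟨hu.1, hu'.2⟩, (hmono hu' hbS.1 hu.2).trans hbS.2⟩
  · rcases le_total (v t) r with hrt | hrt
    · have : sSup S = t := le_antisymm hbS.1.2 (hle_sSup ⟨right_mem_Icc.2 hst, hrt⟩)
      rw [this, min_eq_right hrt]
    · -- the largest point of `S` is a solution of `v = r`, by the intermediate value theorem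
      obtain ⟨c, hc, hvc⟩ :=
        intermediate_value_Icc hbS.1.2 (hcont.mono (Icc_subset_Icc_left hbS.1.1)) ⟨hbS.2, hrt⟩
      have hcS : c ∈ S := ⟨⟨hbS.1.1.trans hc.1, hc.2⟩, hvc.le⟩
      have hcb : c = sSup S := le_antisymm (hle_sSup hcS) hc.1
      rw [← hcb, hvc, min_eq_left hrt]

variable {μ : Measure ℝ}

lemma measure_Ioc_inter_preimage_Iic (hst : s ≤ t) (hmono : MonotoneOn v (Icc s t))
    (hcont : ContinuousOn v (Icc s t))
    (hμ : ∀ a b, s ≤ a → a ≤ b → b ≤ t → μ (Ioc a b) = ENNReal.ofReal (v b - v a)) (r : ℝ) :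
    μ (Ioc s t ∩ v ⁻¹' Iic r) = ENNReal.ofReal (min r (v t) - v s) := by
  rcases lt_or_ge r (v s) with hr | hr
  · have hempty : Ioc s t ∩ v ⁻¹' Iic r = ∅ := by
      refine eq_empty_of_forall_notMem fun u ⟨hu, hvu⟩ ↦ ?_
      have hvsu : v s ≤ v u := hmono (left_mem_Icc.2 hst) (Ioc_subset_Icc_self hu) hu.1.le
      exact (hvsu.trans_lt (lt_of_le_of_lt hvu hr)).false
    rw [hempty, measure_empty, ENNReal.ofReal_of_nonpos (by linarith [min_le_left r (v t)])]
  · obtain ⟨b, hb, hset, hvb⟩ := exists_Ioc_inter_preimage_Iic_eq hst hmono hcont hr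
    rw [hset, hμ s b le_rfl hb.1 hb.2, hvb]

lemma map_restrict_Ioc_eq_volume (hst : s ≤ t) (hmono : MonotoneOn v (Icc s t))
    (hcont : ContinuousOn v (Icc s t))
    (hμ : ∀ a b, s ≤ a → a ≤ b → b ≤ t → μ (Ioc a b) = ENNReal.ofReal (v b - v a)) :
    (μ.restrict (Ioc s t)).map v = volume.restrict (Ioc (v s) (v t)) := by
  have hv : AEMeasurable v (μ.restrict (Ioc s t)) :=
    (hcont.mono Ioc_subset_Icc_self).aemeasurable measurableSet_Ioc
  have : IsFiniteMeasure (μ.restrict (Ioc s t)) :=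
    ⟨by simp [hμ s t le_rfl hst le_rfl]⟩
  refine Measure.ext_of_Iic _ _ fun r ↦ ?_
  rw [Measure.map_apply_of_aemeasurable hv measurableSet_Iic,
    Measure.restrict_apply' measurableSet_Ioc, inter_comm,
    measure_Ioc_inter_preimage_Iic hst hmono hcont hμ, Measure.restrict_apply measurableSet_Iic,
    inter_comm, Ioc_inter_Iic, Real.volume_Ioc, inf_comm]

lemma setIntegral_comp_eq_setIntegral_Ioc {f : ℝ → ℝ} (hf : Continuous f) (hst : s ≤ t)
    (hmono : MonotoneOn v (Icc s t)) (hcont : ContinuousOn v (Icc s t))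
    (hμ : ∀ a b, s ≤ a → a ≤ b → b ≤ t → μ (Ioc a b) = ENNReal.ofReal (v b - v a)) :
    ∫ u in Ioc s t, f (v u) ∂μ = ∫ w in Ioc (v s) (v t), f w := by
  rw [← map_restrict_Ioc_eq_volume hst hmono hcont hμ, integral_map
    ((hcont.mono Ioc_subset_Icc_self).aemeasurable measurableSet_Ioc) hf.aestronglyMeasurable]

end StieltjesPushforward

end GaussianFlow

theorem polynomial_gaussian_expectation_flow_general
    (T : ℝ)
    (v : ℝ → ℝ) (hv0 : ∀ t ∈ Set.Icc (0 : ℝ) T, 0 ≤ v t)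
    (hvmono : MonotoneOn v (Set.Icc (0 : ℝ) T))
    (hvcont : ContinuousOn v (Set.Icc (0 : ℝ) T))
    (μ : Measure ℝ)
    (hμ : ∀ a b : ℝ, 0 ≤ a → a ≤ b → b ≤ T →
      μ (Set.Ioc a b) = ENNReal.ofReal (v b - v a))
    (Q : Polynomial ℝ) :
    ∀ s t : ℝ, 0 ≤ s → s ≤ t → t ≤ T →
      (∫ x, Q.eval x ∂(gaussianReal 0 (v t).toNNReal))
          - (∫ x, Q.eval x ∂(gaussianReal 0 (v s).toNNReal))
        = (1 / 2) * ∫ u in Set.Ioc s t,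
            (∫ x, (Q.derivative.derivative).eval x
              ∂(gaussianReal 0 (v u).toNNReal)) ∂μ := by
  intro s t hs hst ht
  have hsub : Icc s t ⊆ Icc 0 T := Icc_subset_Icc hs ht
  have hmono := hvmono.mono hsub
  have hcont := hvcont.mono hsub
  rw [GaussianFlow.integral_eval_gaussianReal_sub Q (hv0 s (hsub (left_mem_Icc.2 hst)))
      (hmono (left_mem_Icc.2 hst) (right_mem_Icc.2 hst) hst),
    GaussianFlow.setIntegral_comp_eq_setIntegral_Ioc
      (GaussianFlow.continuous_integral_eval_gaussianReal _) hst hmono hcont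
      fun a b ha hab hb ↦ hμ a b (hs.trans ha) hab (hb.trans ht)]

/-- polynomial Gaussian expectation flow.  For a nondecreasing,
nonnegative, continuous variance function `v` on `[0,T]` with Lebesgue–Stieltjes
measure `μ` and any real polynomial `Q`,
`∫ Q dN(0,v(t)) − ∫ Q dN(0,v(s))
  = (1/2) ∫_{(s,t]} (∫ Q'' dN(0,v(u))) dμ(u)`. -/
theorem polynomial_gaussian_expectation_flow
    (T : ℝ) (hT : 0 < T)
    (v : ℝ → ℝ) (hv0 : ∀ t ∈ Set.Icc (0 : ℝ) T, 0 ≤ v t)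
    (hvmono : MonotoneOn v (Set.Icc (0 : ℝ) T))
    (hvcont : ContinuousOn v (Set.Icc (0 : ℝ) T))
    (μ : Measure ℝ)
    (hμ : ∀ a b : ℝ, 0 ≤ a → a ≤ b → b ≤ T →
      μ (Set.Ioc a b) = ENNReal.ofReal (v b - v a))
    (Q : Polynomial ℝ) :
    ∀ s t : ℝ, 0 ≤ s → s ≤ t → t ≤ T →
      (∫ x, Q.eval x ∂(gaussianReal 0 (v t).toNNReal))
          - (∫ x, Q.eval x ∂(gaussianReal 0 (v s).toNNReal))
        = (1 / 2) * ∫ u in Set.Ioc s t,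
            (∫ x, (Q.derivative.derivative).eval x
              ∂(gaussianReal 0 (v u).toNNReal)) ∂μ :=
  polynomial_gaussian_expectation_flow_general T v hv0 hvmono hvcont μ hμ Q
end

section
/- Uniform moment bounds (Lemma 5.1): Under the moment-recursion hypotheses on (X_t)_{t∈[0,T]} and ν_2, …, ν_k stated in the context, for every n ∈ ℕ and every t ∈ [0,T]: 𝔼[|X_t|^n] ≤ ((3 + (−1)^{n+1})/2) · n! · C^n; that is, 𝔼[|X_t|^n] ≤ n!·C^n when n is even and 𝔼[|X_t|^n] ≤ 2·n!·C^n when n is odd, where C := max(4, max_{2 ≤ j ≤ k} ‖ν_j‖). -/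
/-!
Even moments are controlled directly: `𝔼|X_t|^{2l} = 𝔼[X_t^{2l}]`, and the recursion bounds this by
`∑_j n!/(n-j)! · ‖ν_j‖ · sup_s 𝔼|X_s|^{n-j}`; with the inductive bound `2 m! C^m` on all lower moments
the sum is at most `2 n! ∑_{i ≥ 1} C^{n-i} ≤ n! C^n`, since `C ≥ 3`.
Odd moments are interpolated between their even neighbours through
`2r|x|^{2l+1} ≤ r²|x|^{2l} + |x|^{2l+2}` with `r = (2l+1)C`; this is where the factor `2` for odd `n` comes from.
-/

open MeasureTheory Finset

theorem two_mul_mul_pow_odd_le (r a : ℝ) (l : ℕ) :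
    2 * r * a ^ (2 * l + 1) ≤ r ^ 2 * a ^ (2 * l) + a ^ (2 * l + 2) := by
  have h : r ^ 2 * a ^ (2 * l) + a ^ (2 * l + 2) - 2 * r * a ^ (2 * l + 1)
      = (a ^ l * (r - a)) ^ 2 := by ring
  linarith [sq_nonneg (a ^ l * (r - a))]

section
variable {Ω : Type*} [MeasurableSpace Ω] {μ : Measure Ω} {f : Ω → ℝ} {C : ℝ}

theorem two_mul_integral_abs_pow_odd_le {r : ℝ} (hr : 0 ≤ r) (l : ℕ)
    (h0 : Integrable (fun ω => |f ω| ^ (2 * l)) μ)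
    (h2 : Integrable (fun ω => |f ω| ^ (2 * l + 2)) μ) :
    2 * r * ∫ ω, |f ω| ^ (2 * l + 1) ∂μ
      ≤ r ^ 2 * ∫ ω, |f ω| ^ (2 * l) ∂μ + ∫ ω, |f ω| ^ (2 * l + 2) ∂μ := by
  rw [← integral_const_mul, ← integral_const_mul, ← integral_add (h0.const_mul _) h2]
  exact integral_mono_of_nonneg (ae_of_all _ fun ω => by positivity)
    ((h0.const_mul _).add h2) (ae_of_all _ fun ω => two_mul_mul_pow_odd_le r |f ω| l)

theorem integral_abs_pow_odd_le_of_even (hC : 0 < C) (l : ℕ)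
    (h0 : Integrable (fun ω => |f ω| ^ (2 * l)) μ)
    (h2 : Integrable (fun ω => |f ω| ^ (2 * l + 2)) μ)
    (hb0 : ∫ ω, |f ω| ^ (2 * l) ∂μ ≤ (2 * l).factorial * C ^ (2 * l))
    (hb2 : ∫ ω, |f ω| ^ (2 * l + 2) ∂μ ≤ (2 * l + 2).factorial * C ^ (2 * l + 2)) :
    ∫ ω, |f ω| ^ (2 * l + 1) ∂μ ≤ 2 * (2 * l + 1).factorial * C ^ (2 * l + 1) := by
  set L : ℝ := 2 * l + 1
  have hL : 1 ≤ L := by simp [L]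
  set F : ℝ := ((2 * l).factorial : ℝ)
  set P : ℝ := C ^ (2 * l)
  have hF1 : ((2 * l + 1).factorial : ℝ) = L * F := by
    simp only [L, F, Nat.factorial_succ]; push_cast; ring
  have hF2 : ((2 * l + 2).factorial : ℝ) = (L + 1) * (L * F) := by
    simp only [L, F, Nat.factorial_succ]; push_cast; ring
  have hP1 : C ^ (2 * l + 1) = P * C := pow_succ _ _
  have hP2 : C ^ (2 * l + 2) = P * C ^ 2 := pow_add _ _ _
  rw [hF2, hP2] at hb2
  rw [hF1, hP1]
  have key := two_mul_integral_abs_pow_odd_le (μ := μ) (f := f) (r := L * C) (by positivity) l h0 h2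
  have hrF : (L * C) ^ 2 * ∫ ω, |f ω| ^ (2 * l) ∂μ ≤ (L * C) ^ 2 * (F * P) :=
    mul_le_mul_of_nonneg_left hb0 (sq_nonneg _)
  refine le_of_mul_le_mul_left ?_ (show 0 < 2 * (L * C) by positivity)
  have hLFPC : 0 ≤ L * F * P * C ^ 2 := by positivity
  calc 2 * (L * C) * ∫ ω, |f ω| ^ (2 * l + 1) ∂μ
      ≤ (L * C) ^ 2 * (F * P) + (L + 1) * (L * F) * (P * C ^ 2) := by linarith
    _ = L * F * P * C ^ 2 * (2 * L + 1) := by ring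
    _ ≤ L * F * P * C ^ 2 * (4 * L) := mul_le_mul_of_nonneg_left (by linarith) hLFPC
    _ = 2 * (L * C) * (2 * (L * F) * (P * C)) := by ring

theorem integral_abs_pow_le_of_even_moments (hC : 0 < C)
    (hint : ∀ n, Integrable (fun ω => |f ω| ^ n) μ) {l : ℕ}
    (heven : ∀ i ≤ l, ∫ ω, |f ω| ^ (2 * i) ∂μ ≤ (2 * i).factorial * C ^ (2 * i))
    {m : ℕ} (hm : m ≤ 2 * l) :
    ∫ ω, |f ω| ^ m ∂μ ≤ 2 * m.factorial * C ^ m := by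
  obtain ⟨i, rfl | rfl⟩ := Nat.even_or_odd' m
  · have := heven i (by omega)
    have : (0 : ℝ) ≤ (2 * i).factorial * C ^ (2 * i) := by positivity
    linarith
  · have h2 := heven (i + 1) (by omega)
    rw [show 2 * (i + 1) = 2 * i + 2 by ring] at h2
    exact integral_abs_pow_odd_le_of_even hC i (hint _) (hint _) (heven i (by omega)) h2

theorem integral_abs_pow_even_le [IsProbabilityMeasure μ] {ι : Type*} {X : ι → Ω → ℝ}
    {S : Set ι} (hC : 0 < C)
    (hint : ∀ t ∈ S, ∀ n, Integrable (fun ω => |X t ω| ^ n) μ)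
    (hstep : ∀ n, 1 ≤ n →
      (∀ m, m + 2 ≤ n → ∀ s ∈ S, ∫ ω, |X s ω| ^ m ∂μ ≤ 2 * m.factorial * C ^ m) →
      ∀ t ∈ S, |∫ ω, X t ω ^ n ∂μ| ≤ n.factorial * C ^ n)
    (l : ℕ) : ∀ t ∈ S, ∫ ω, |X t ω| ^ (2 * l) ∂μ ≤ (2 * l).factorial * C ^ (2 * l) := by
  induction l using Nat.strong_induction_on with
  | _ l ih =>
    intro t ht
    obtain _ | l := l
    · simp
    have hlow : ∀ m, m + 2 ≤ 2 * (l + 1) → ∀ s ∈ S,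
        ∫ ω, |X s ω| ^ m ∂μ ≤ 2 * m.factorial * C ^ m := fun m hm s hs =>
      integral_abs_pow_le_of_even_moments hC (hint s hs) (l := l)
        (fun i hi => ih i (by omega) s hs) (by omega)
    calc _ = ∫ ω, X t ω ^ (2 * (l + 1)) ∂μ := by simp_rw [(even_two_mul _).pow_abs]
      _ ≤ |∫ ω, X t ω ^ (2 * (l + 1)) ∂μ| := le_abs_self _
      _ ≤ _ := hstep _ (by omega) hlow t ht

end

theorem abs_setIntegral_sub_setIntegral_le {α : Type*} [MeasurableSpace α] {μ ν : Measure α}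
    [IsFiniteMeasure μ] [IsFiniteMeasure ν] {s t : Set α} (hst : s ⊆ t) {g : α → ℝ} {B : ℝ}
    (hB : 0 ≤ B) (hg : ∀ x ∈ s, |g x| ≤ B) :
    |∫ x in s, g x ∂μ - ∫ x in s, g x ∂ν| ≤ B * (μ t + ν t).toReal := by
  have bound (ρ : Measure α) [IsFiniteMeasure ρ] : |∫ x in s, g x ∂ρ| ≤ B * ρ.real t := by
    rw [← Real.norm_eq_abs]
    exact (norm_setIntegral_le_of_norm_le_const (measure_lt_top _ _) hg).trans
      (mul_le_mul_of_nonneg_left (measureReal_mono (μ := ρ) hst) hB)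
  rw [ENNReal.toReal_add (measure_ne_top _ _) (measure_ne_top _ _)]
  calc _ ≤ |∫ x in s, g x ∂μ| + |∫ x in s, g x ∂ν| := abs_sub _ _
    _ ≤ B * (μ.real t + ν.real t) := by rw [mul_add]; exact add_le_add (bound μ) (bound ν)

theorem two_mul_geom_sum_le_pow {C : ℝ} (hC : 3 ≤ C) (m : ℕ) :
    2 * ∑ i ∈ range m, C ^ i ≤ C ^ m := by
  induction m with
  | zero => simp
  | succ m ih =>
    rw [sum_range_succ, pow_succ]
    nlinarith [pow_nonneg (show (0 : ℝ) ≤ C by linarith) m]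

theorem two_mul_mul_sum_Icc_pow_sub_le {C : ℝ} (hC : 3 ≤ C) {m n : ℕ} (hmn : m ≤ n) :
    2 * C * ∑ j ∈ Icc 2 m, C ^ (n - j) ≤ C ^ n := by
  obtain _ | n := n
  · simp [Nat.le_zero.mp hmn]
  have hinj : Set.InjOn (fun j => n + 1 - j) (Icc 2 m) := by
    intro x hx y hy hxy
    simp only [coe_Icc, Set.mem_Icc] at hx hy hxy
    omega
  have himg : (Icc 2 m).image (fun j => n + 1 - j) ⊆ range n := by
    intro i hi
    simp only [mem_image, mem_Icc, mem_range] at hi ⊢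
    omega
  have hsum : ∑ j ∈ Icc 2 m, C ^ (n + 1 - j) ≤ ∑ i ∈ range n, C ^ i := by
    rw [← sum_image hinj]
    exact sum_le_sum_of_subset_of_nonneg himg fun i _ _ => by positivity
  calc 2 * C * ∑ j ∈ Icc 2 m, C ^ (n + 1 - j) ≤ C * (2 * ∑ i ∈ range n, C ^ i) := by
        rw [mul_comm 2 C, mul_assoc]; gcongr
    _ ≤ C ^ (n + 1) := by
        rw [pow_succ']; exact mul_le_mul_of_nonneg_left (two_mul_geom_sum_le_pow hC n) (by linarith)

theorem abs_integral_pow_le_of_moment_recursion {Ω : Type*} [MeasurableSpace Ω]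
    {ℙ : Measure Ω} {X : ℝ → Ω → ℝ} {T C : ℝ} {k n : ℕ} {t : ℝ} {νp νm : ℕ → Measure ℝ}
    (hC : 3 ≤ C) (hfinp : ∀ j, IsFiniteMeasure (νp j)) (hfinm : ∀ j, IsFiniteMeasure (νm j))
    (hν : ∀ j ∈ Icc 2 k, ((νp j) (Set.Icc 0 T) + (νm j) (Set.Icc 0 T)).toReal ≤ C)
    (hrec : (∫ ω, X t ω ^ n ∂ℙ)
        = ∑ j ∈ Icc 2 (min n k), (n.descFactorial j : ℝ) *
            ((∫ s in Set.Ioc (0 : ℝ) t, (∫ ω, X s ω ^ (n - j) ∂ℙ) ∂(νp j))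
              - ∫ s in Set.Ioc (0 : ℝ) t, (∫ ω, X s ω ^ (n - j) ∂ℙ) ∂(νm j)))
    (htT : t ≤ T)
    (hlow : ∀ m, m + 2 ≤ n → ∀ s ∈ Set.Ioc 0 t, ∫ ω, |X s ω| ^ m ∂ℙ ≤ 2 * m.factorial * C ^ m) :
    |∫ ω, X t ω ^ n ∂ℙ| ≤ n.factorial * C ^ n := by
  have hterm : ∀ j ∈ Icc 2 (min n k),
      |(n.descFactorial j : ℝ) *
        ((∫ s in Set.Ioc (0 : ℝ) t, (∫ ω, X s ω ^ (n - j) ∂ℙ) ∂(νp j))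
          - ∫ s in Set.Ioc (0 : ℝ) t, (∫ ω, X s ω ^ (n - j) ∂ℙ) ∂(νm j))|
        ≤ 2 * n.factorial * C * C ^ (n - j) := by
    intro j hj
    obtain ⟨hj2, hjnk⟩ := mem_Icc.mp hj
    have hjn : j ≤ n := hjnk.trans (min_le_left _ _)
    have hjk : j ≤ k := hjnk.trans (min_le_right _ _)
    have := hfinp j
    have := hfinm j
    set B : ℝ := 2 * (n - j).factorial * C ^ (n - j)
    have hB : 0 ≤ B := by positivity
    have hmoment : ∀ s ∈ Set.Ioc 0 t, |∫ ω, X s ω ^ (n - j) ∂ℙ| ≤ B := fun s hs =>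
      abs_integral_le_integral_abs.trans
        (by simpa only [abs_pow] using hlow (n - j) (by omega) s hs)
    have hsigned := abs_setIntegral_sub_setIntegral_le (μ := νp j) (ν := νm j)
      (Set.Ioc_subset_Icc_self.trans (Set.Icc_subset_Icc_right htT)) hB hmoment
    calc _ = (n.descFactorial j : ℝ) *
          |(∫ s in Set.Ioc (0 : ℝ) t, (∫ ω, X s ω ^ (n - j) ∂ℙ) ∂(νp j))
            - ∫ s in Set.Ioc (0 : ℝ) t, (∫ ω, X s ω ^ (n - j) ∂ℙ) ∂(νm j)| := by
          rw [abs_mul, Nat.abs_cast]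
      _ ≤ n.descFactorial j * (B * C) := mul_le_mul_of_nonneg_left
          (hsigned.trans (mul_le_mul_of_nonneg_left (hν j (mem_Icc.mpr ⟨hj2, hjk⟩)) hB))
          (by positivity)
      _ = 2 * n.factorial * C * C ^ (n - j) := by
          rw [← Nat.factorial_mul_descFactorial hjn]; push_cast; ring
  rw [hrec]
  calc _ ≤ ∑ j ∈ Icc 2 (min n k), 2 * n.factorial * C * C ^ (n - j) :=
        (abs_sum_le_sum_abs _ _).trans (sum_le_sum hterm)
    _ = n.factorial * (2 * C * ∑ j ∈ Icc 2 (min n k), C ^ (n - j)) := by rw [← mul_sum]; ring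
    _ ≤ n.factorial * C ^ n := mul_le_mul_of_nonneg_left
        (two_mul_mul_sum_Icc_pow_sub_le hC (min_le_left _ _)) (by positivity)

theorem uniform_moment_bounds_general
    {Ω : Type*} [MeasurableSpace Ω] (ℙ : Measure Ω) [IsProbabilityMeasure ℙ]
    (T : ℝ) (k : ℕ) (hk2 : 2 ≤ k)
    (X : ℝ → Ω → ℝ)
    (hint : ∀ t ∈ Set.Icc (0 : ℝ) T, ∀ n : ℕ, Integrable (fun ω => |X t ω| ^ n) ℙ)
    (νp νm : ℕ → Measure ℝ)
    (hfinp : ∀ j, IsFiniteMeasure (νp j)) (hfinm : ∀ j, IsFiniteMeasure (νm j))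
    (hrec : ∀ n : ℕ, 1 ≤ n → ∀ t ∈ Set.Icc (0 : ℝ) T,
      (∫ ω, X t ω ^ n ∂ℙ)
        = ∑ j ∈ Finset.Icc 2 (min n k), (Nat.descFactorial n j : ℝ) *
            ((∫ s in Set.Ioc (0 : ℝ) t, (∫ ω, X s ω ^ (n - j) ∂ℙ) ∂(νp j))
              - ∫ s in Set.Ioc (0 : ℝ) t, (∫ ω, X s ω ^ (n - j) ∂ℙ) ∂(νm j)))
    (C : ℝ)
    (hC : C = max 4 ((Finset.Icc 2 k).sup' (Finset.nonempty_Icc.mpr hk2)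
      fun j => ((νp j) (Set.Icc 0 T) + (νm j) (Set.Icc 0 T)).toReal)) :
    ∀ n : ℕ, ∀ t ∈ Set.Icc (0 : ℝ) T,
      (∫ ω, |X t ω| ^ n ∂ℙ)
        ≤ ((3 + (-1 : ℝ) ^ (n + 1)) / 2) * (Nat.factorial n : ℝ) * C ^ n := by
  intro n t ht
  have hC3 : 3 ≤ C := hC ▸ le_max_of_le_left (by norm_num)
  have hν : ∀ j ∈ Icc 2 k, ((νp j) (Set.Icc 0 T) + (νm j) (Set.Icc 0 T)).toReal ≤ C :=
    fun j hj => hC ▸ le_max_of_le_right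
      (le_sup' (fun j => ((νp j) (Set.Icc 0 T) + (νm j) (Set.Icc 0 T)).toReal) hj)
  have heven := integral_abs_pow_even_le (by linarith) hint fun n hn hlow t ht =>
    abs_integral_pow_le_of_moment_recursion hC3 hfinp hfinm hν (hrec n hn t ht) ht.2
      fun m hm s hs => hlow m hm s ⟨hs.1.le, hs.2.trans ht.2⟩
  obtain ⟨l, rfl | rfl⟩ := Nat.even_or_odd' n
  · rw [pow_succ, (even_two_mul l).neg_one_pow]
    norm_num
    exact heven l t ht
  · rw [pow_succ, (odd_two_mul_add_one l).neg_one_pow]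
    norm_num
    exact integral_abs_pow_le_of_even_moments (by linarith) (hint t ht) (l := l + 1)
      (fun i _ => heven i t ht) (by omega)

/-- uniform moment bounds (Lemma 5.1).  The finite signed Borel
measures `ν_j` (`2 ≤ j ≤ k`) are represented by their Jordan decomposition
`ν_j = νp j − νm j` into mutually singular finite measures, so that
`‖ν_j‖ = νp j ([0,T]) + νm j ([0,T])`.  Under the moment recursion
`𝔼[X_t^n] = ∑_{j=2}^{min(n,k)} (n!/(n−j)!) ∫_{(0,t]} 𝔼[X_s^{n−j}] dν_j(s)`,
one has `𝔼[|X_t|^n] ≤ ((3+(−1)^{n+1})/2)·n!·C^n` with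
`C := max(4, max_{2≤j≤k} ‖ν_j‖)`. -/
theorem uniform_moment_bounds
    {Ω : Type*} [MeasurableSpace Ω] (ℙ : Measure Ω) [IsProbabilityMeasure ℙ]
    (T : ℝ) (hT : 0 < T) (k : ℕ) (hk2 : 2 ≤ k)
    (X : ℝ → Ω → ℝ)
    (hint : ∀ t ∈ Set.Icc (0 : ℝ) T, ∀ n : ℕ, Integrable (fun ω => |X t ω| ^ n) ℙ)
    (hmeas : ∀ n : ℕ, Measurable fun t : ℝ => ∫ ω, X t ω ^ n ∂ℙ)
    (νp νm : ℕ → Measure ℝ)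
    (hfinp : ∀ j, IsFiniteMeasure (νp j)) (hfinm : ∀ j, IsFiniteMeasure (νm j))
    (hsing : ∀ j, (νp j).MutuallySingular (νm j))
    (hrec : ∀ n : ℕ, 1 ≤ n → ∀ t ∈ Set.Icc (0 : ℝ) T,
      (∫ ω, X t ω ^ n ∂ℙ)
        = ∑ j ∈ Finset.Icc 2 (min n k), (Nat.descFactorial n j : ℝ) *
            ((∫ s in Set.Ioc (0 : ℝ) t, (∫ ω, X s ω ^ (n - j) ∂ℙ) ∂(νp j))
              - ∫ s in Set.Ioc (0 : ℝ) t, (∫ ω, X s ω ^ (n - j) ∂ℙ) ∂(νm j)))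
    (C : ℝ)
    (hC : C = max 4 ((Finset.Icc 2 k).sup' (Finset.nonempty_Icc.mpr hk2)
      fun j => ((νp j) (Set.Icc 0 T) + (νm j) (Set.Icc 0 T)).toReal)) :
    ∀ n : ℕ, ∀ t ∈ Set.Icc (0 : ℝ) T,
      (∫ ω, |X t ω| ^ n ∂ℙ)
        ≤ ((3 + (-1 : ℝ) ^ (n + 1)) / 2) * (Nat.factorial n : ℝ) * C ^ n :=
  uniform_moment_bounds_general ℙ T k hk2 X hint νp νm hfinp hfinm hrec C hC
end

section
/- Geometricity is preserved under the canonical rough-path lift of a controlled path (Proposition B.3): Let (X, 𝕏) be a geometric d-dimensional level-2 rough path on [0,T] with α ∈ (1/3, 1/2], and let (Y, Y') be an ℝ^n-valued controlled path. Suppose 𝕐, defined on the simplex with values in the n × n real matrices, satisfies: for every 0 ≤ s ≤ t ≤ T, every ε > 0 there is δ > 0 such that for every partition s = t_0 < ⋯ < t_N = t of [s,t] with mesh < δ and all indices i, j ∈ {1, …, n}, | ∑_{m=0}^{N−1} [ (Y^i_{t_m} − Y^i_s)·(Y^j_{t_{m+1}} − Y^j_{t_m}) + ∑_{a,b=1}^{d}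 (Y'_{t_m})^{ia} · (Y'_{t_m})^{jb} · 𝕏^{ab}_{t_m, t_{m+1}} ] − 𝕐^{ij}_{s,t} | < ε. Then 𝕐 is geometric over Y: 𝕐^{ij}_{s,t} + 𝕐^{ji}_{s,t} = (Y^i_t − Y^i_s)·(Y^j_t − Y^j_s) for all 0 ≤ s ≤ t ≤ T and all i, j ∈ {1, …, n}. -/
open Finset

set_option maxHeartbeats 1000000

/-- geometricity is preserved under the canonical rough-path lift
of a controlled path.  Let `(X,𝕏)` be a geometric `d`-dimensional level-2
`α`-Hölder rough path (`1/3 < α ≤ 1/2`), `(Y,Y')` an `ℝⁿ`-valued controlled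
path, and suppose `𝕐^{ij}_{s,t}` is the limit of the compensated Riemann sums
`∑_m [(Y^i_{t_m} − Y^i_s)(Y^j_{t_{m+1}} − Y^j_{t_m}) + ∑_{a,b} Y'^{ia}_{t_m}
Y'^{jb}_{t_m} 𝕏^{ab}_{t_m,t_{m+1}}]` as the mesh tends to `0`.  Then
`𝕐^{ij}_{s,t} + 𝕐^{ji}_{s,t} = (Y^i_t − Y^i_s)(Y^j_t − Y^j_s)`. -/
theorem geometricity_preserved
    (T α : ℝ) (hT : 0 < T) (hα : 1 / 3 < α) (hα2 : α ≤ 1 / 2)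
    (d n : ℕ) (hd : 1 ≤ d) (hn : 1 ≤ n)
    (X : ℝ → Fin d → ℝ) (𝕏 : ℝ → ℝ → Fin d → Fin d → ℝ) (C : ℝ)
    (hXHol : ∀ a : Fin d, ∀ s t : ℝ, 0 ≤ s → s ≤ t → t ≤ T →
      |X t a - X s a| ≤ C * (t - s) ^ α)
    (h𝕏Hol : ∀ a b : Fin d, ∀ s t : ℝ, 0 ≤ s → s ≤ t → t ≤ T →
      |𝕏 s t a b| ≤ C * (t - s) ^ (2 * α))
    (hChen : ∀ a b : Fin d, ∀ s u t : ℝ, 0 ≤ s → s ≤ u → u ≤ t → t ≤ T →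
      𝕏 s t a b = 𝕏 s u a b + 𝕏 u t a b + (X u a - X s a) * (X t b - X u b))
    (hgeo : ∀ a b : Fin d, ∀ s t : ℝ, 0 ≤ s → s ≤ t → t ≤ T →
      𝕏 s t a b + 𝕏 s t b a = (X t a - X s a) * (X t b - X s b))
    (Y : ℝ → Fin n → ℝ) (Y' : ℝ → Fin n → Fin d → ℝ) (CY : ℝ)
    (hY'Hol : ∀ i : Fin n, ∀ a : Fin d, ∀ s t : ℝ, 0 ≤ s → s ≤ t → t ≤ T →
      |Y' t i a - Y' s i a| ≤ CY * (t - s) ^ α)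
    (hYctrl : ∀ i : Fin n, ∀ s t : ℝ, 0 ≤ s → s ≤ t → t ≤ T →
      |Y t i - Y s i - ∑ a : Fin d, Y' s i a * (X t a - X s a)|
        ≤ CY * (t - s) ^ (2 * α))
    (𝕐 : ℝ → ℝ → Fin n → Fin n → ℝ)
    (h𝕐 : ∀ s t : ℝ, 0 ≤ s → s ≤ t → t ≤ T → ∀ ε > (0 : ℝ), ∃ δ > (0 : ℝ),
      ∀ (N : ℕ) (π : ℕ → ℝ), π 0 = s → π N = t →
        (∀ m < N, π m < π (m + 1)) → (∀ m < N, π (m + 1) - π m < δ) →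
        ∀ i j : Fin n,
          |(∑ m ∈ Finset.range N,
              ((Y (π m) i - Y s i) * (Y (π (m + 1)) j - Y (π m) j)
                + ∑ a : Fin d, ∑ b : Fin d,
                    Y' (π m) i a * Y' (π m) j b * 𝕏 (π m) (π (m + 1)) a b))
            - 𝕐 s t i j| < ε) :
    ∀ s t : ℝ, 0 ≤ s → s ≤ t → t ≤ T → ∀ i j : Fin n,
      𝕐 s t i j + 𝕐 s t j i = (Y t i - Y s i) * (Y t j - Y s j) := by
  
  intro s t hs hst htT i j
  have hα0 : (0:ℝ) < α := by linarith
  have hTα : (0:ℝ) < T ^ α := Real.rpow_pos_of_pos hT α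
  have hC : 0 ≤ C := by
    have h := hXHol ⟨0, hd⟩ 0 T le_rfl hT.le le_rfl
    have h0 := abs_nonneg (X T ⟨0, hd⟩ - X 0 ⟨0, hd⟩)
    rw [sub_zero] at h
    nlinarith
  have hCY : 0 ≤ CY := by
    have h := hY'Hol ⟨0, hn⟩ ⟨0, hd⟩ 0 T le_rfl hT.le le_rfl
    have h0 := abs_nonneg (Y' T ⟨0, hn⟩ ⟨0, hd⟩ - Y' 0 ⟨0, hn⟩ ⟨0, hd⟩)
    rw [sub_zero] at h
    nlinarith
  set M0 : ℝ := ∑ i' : Fin n, ∑ a : Fin d, |Y' 0 i' a| with hM0def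
  have hM0 : ∀ (i' : Fin n) (a : Fin d), |Y' 0 i' a| ≤ M0 := by
    intro i' a
    calc |Y' 0 i' a| ≤ ∑ a : Fin d, |Y' 0 i' a| :=
          Finset.single_le_sum (f := fun a => |Y' 0 i' a|)
            (fun b _ => abs_nonneg _) (Finset.mem_univ a)
      _ ≤ M0 := Finset.single_le_sum (f := fun i' => ∑ a : Fin d, |Y' 0 i' a|)
          (fun b _ => Finset.sum_nonneg fun _ _ => abs_nonneg _) (Finset.mem_univ i')
  have hM0nn : 0 ≤ M0 :=
    Finset.sum_nonneg fun _ _ => Finset.sum_nonneg fun _ _ => abs_nonneg _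
  set M : ℝ := M0 + CY * T ^ α with hMdef
  have hMnn : 0 ≤ M := by positivity
  have hMb : ∀ u, 0 ≤ u → u ≤ T → ∀ (i' : Fin n) (a : Fin d), |Y' u i' a| ≤ M := by
    intro u hu huT i' a
    have h1 := hY'Hol i' a 0 u le_rfl hu huT
    rw [sub_zero] at h1
    have h2 : CY * u ^ α ≤ CY * T ^ α :=
      mul_le_mul_of_nonneg_left (Real.rpow_le_rpow hu huT hα0.le) hCY
    calc |Y' u i' a| = |Y' 0 i' a + (Y' u i' a - Y' 0 i' a)| := by congr 1; ring
      _ ≤ |Y' 0 i' a| + |Y' u i' a - Y' 0 i' a| := abs_add_le _ _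
      _ ≤ M0 + CY * u ^ α := add_le_add (hM0 i' a) h1
      _ ≤ M := by rw [hMdef]; linarith
  set K : ℝ := 2 * ((d:ℝ) * M * C) * CY + CY ^ 2 * T ^ α with hKdef
  have hPbound : ∀ u v, 0 ≤ u → u ≤ v → v ≤ T → ∀ i' : Fin n,
      |∑ a : Fin d, Y' u i' a * (X v a - X u a)| ≤ (d:ℝ) * (M * (C * (v - u) ^ α)) := by
    intro u v hu huv hvT i'
    calc |∑ a : Fin d, Y' u i' a * (X v a - X u a)|
        ≤ ∑ a : Fin d, |Y' u i' a * (X v a - X u a)| := Finset.abs_sum_le_sum_abs _ _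
      _ ≤ ∑ _a : Fin d, M * (C * (v - u) ^ α) := by
          refine Finset.sum_le_sum fun a _ => ?_
          rw [abs_mul]
          exact mul_le_mul (hMb u hu (huv.trans hvT) i' a) (hXHol a u v hu huv hvT)
            (abs_nonneg _) hMnn
      _ = (d:ℝ) * (M * (C * (v - u) ^ α)) := by
          rw [Finset.sum_const, Finset.card_univ, Fintype.card_fin, nsmul_eq_mul]
  have hKey : ∀ u v, 0 ≤ u → u < v → v ≤ T → ∀ i' j' : Fin n,
      |(∑ a : Fin d, Y' u i' a * (X v a - X u a)) *
          (∑ b : Fin d, Y' u j' b * (X v b - X u b))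
        - (Y v i' - Y u i') * (Y v j' - Y u j')| ≤ K * (v - u) ^ (3 * α) := by
    intro u v hu huv hvT i' j'
    have hΔ : (0:ℝ) < v - u := sub_pos.mpr huv
    have hΔT : v - u ≤ T := by linarith
    set Pi := ∑ a : Fin d, Y' u i' a * (X v a - X u a) with hPidef
    set Pj := ∑ b : Fin d, Y' u j' b * (X v b - X u b) with hPjdef
    set Ri := Y v i' - Y u i' - Pi with hRidef
    set Rj := Y v j' - Y u j' - Pj with hRjdef
    have hPi : |Pi| ≤ (d:ℝ) * (M * (C * (v - u) ^ α)) := hPbound u v hu huv.le hvT i'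
    have hPj : |Pj| ≤ (d:ℝ) * (M * (C * (v - u) ^ α)) := hPbound u v hu huv.le hvT j'
    have hRi : |Ri| ≤ CY * (v - u) ^ (2 * α) := hYctrl i' u v hu huv.le hvT
    have hRj : |Rj| ≤ CY * (v - u) ^ (2 * α) := hYctrl j' u v hu huv.le hvT
    have e1 : (v - u) ^ α * (v - u) ^ (2 * α) = (v - u) ^ (3 * α) := by
      rw [← Real.rpow_add hΔ]; ring_nf
    have e2 : (v - u) ^ (2 * α) * (v - u) ^ (2 * α) = (v - u) ^ (3 * α) * (v - u) ^ α := by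
      rw [← Real.rpow_add hΔ, ← Real.rpow_add hΔ]; ring_nf
    have e3 : (v - u) ^ α ≤ T ^ α := Real.rpow_le_rpow hΔ.le hΔT hα0.le
    have nn1 : (0:ℝ) ≤ (v - u) ^ α := Real.rpow_nonneg hΔ.le _
    have nn2 : (0:ℝ) ≤ (v - u) ^ (2 * α) := Real.rpow_nonneg hΔ.le _
    have nn3 : (0:ℝ) ≤ (v - u) ^ (3 * α) := Real.rpow_nonneg hΔ.le _
    have hexp : Pi * Pj - (Y v i' - Y u i') * (Y v j' - Y u j')
        = -(Pi * Rj + Ri * Pj + Ri * Rj) := by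
      rw [hRidef, hRjdef]; ring
    rw [hexp, abs_neg]
    have tri := abs_add_three (Pi * Rj) (Ri * Pj) (Ri * Rj)
    rw [abs_mul, abs_mul, abs_mul] at tri
    have b1 : |Pi| * |Rj| ≤ ((d:ℝ) * (M * (C * (v - u) ^ α))) * (CY * (v - u) ^ (2 * α)) :=
      mul_le_mul hPi hRj (abs_nonneg _) (by positivity)
    have b2 : |Ri| * |Pj| ≤ (CY * (v - u) ^ (2 * α)) * ((d:ℝ) * (M * (C * (v - u) ^ α))) :=
      mul_le_mul hRi hPj (abs_nonneg _) (by positivity)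
    have b3 : |Ri| * |Rj| ≤ (CY * (v - u) ^ (2 * α)) * (CY * (v - u) ^ (2 * α)) :=
      mul_le_mul hRi hRj (abs_nonneg _) (by positivity)
    have c1 : ((d:ℝ) * (M * (C * (v - u) ^ α))) * (CY * (v - u) ^ (2 * α))
        = ((d:ℝ) * M * C * CY) * (v - u) ^ (3 * α) := by
      linear_combination ((d:ℝ) * M * C * CY) * e1
    have c2 : (CY * (v - u) ^ (2 * α)) * ((d:ℝ) * (M * (C * (v - u) ^ α)))
        = ((d:ℝ) * M * C * CY) * (v - u) ^ (3 * α) := by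
      linear_combination ((d:ℝ) * M * C * CY) * e1
    have c3 : (CY * (v - u) ^ (2 * α)) * (CY * (v - u) ^ (2 * α))
        = CY ^ 2 * ((v - u) ^ (3 * α) * (v - u) ^ α) := by
      linear_combination CY ^ 2 * e2
    have c4 : CY ^ 2 * ((v - u) ^ (3 * α) * (v - u) ^ α)
        ≤ (CY ^ 2 * T ^ α) * (v - u) ^ (3 * α) := by
      have h := mul_le_mul_of_nonneg_left e3 (mul_nonneg (sq_nonneg CY) nn3)
      calc CY ^ 2 * ((v - u) ^ (3 * α) * (v - u) ^ α)
          = CY ^ 2 * (v - u) ^ (3 * α) * (v - u) ^ α := by ring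
        _ ≤ CY ^ 2 * (v - u) ^ (3 * α) * T ^ α := h
        _ = (CY ^ 2 * T ^ α) * (v - u) ^ (3 * α) := by ring
    have hfin : K * (v - u) ^ (3 * α)
        = ((d:ℝ) * M * C * CY) * (v - u) ^ (3 * α)
          + ((d:ℝ) * M * C * CY) * (v - u) ^ (3 * α)
          + (CY ^ 2 * T ^ α) * (v - u) ^ (3 * α) := by
      rw [hKdef]; ring
    linarith [tri]
  rcases eq_or_lt_of_le hst with rfl | hlt
  · have hz : ∀ i' j' : Fin n, 𝕐 s s i' j' = 0 := by
      intro i' j'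
      by_contra hne
      obtain ⟨δ, hδ, hpart⟩ := h𝕐 s s hs le_rfl htT |𝕐 s s i' j'| (abs_pos.mpr hne)
      have h := hpart 0 (fun _ => s) rfl rfl
        (fun m hm => absurd hm (Nat.not_lt_zero m))
        (fun m hm => absurd hm (Nat.not_lt_zero m)) i' j'
      simp only [Finset.range_zero, Finset.sum_empty, zero_sub, abs_neg] at h
      exact lt_irrefl _ h
    rw [hz i j, hz j i]
    simp
  · set Pprod := (Y t i - Y s i) * (Y t j - Y s j) with hPproddef
    have hts : (0:ℝ) < t - s := sub_pos.mpr hlt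
    have habs : ∀ ε > (0:ℝ), |𝕐 s t i j + 𝕐 s t j i - Pprod| < ε := by
      intro ε hε
      obtain ⟨δ, hδ, hpart⟩ := h𝕐 s t hs hst htT (ε / 3) (by linarith)
      have hev1 : ∀ᶠ N : ℕ in Filter.atTop, (t - s) / (N:ℝ) < δ :=
        (tendsto_const_div_atTop_nhds_zero_nat (t - s)).eventually_lt_const hδ
      have h3α : (0:ℝ) < 3 * α - 1 := by linarith
      have hpow : Filter.Tendsto (fun N : ℕ => (N:ℝ) ^ (1 - 3 * α))
          Filter.atTop (nhds 0) := by
        have h := (tendsto_rpow_neg_atTop h3α).comp tendsto_natCast_atTop_atTop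
        have he : (fun N : ℕ => (N:ℝ) ^ (1 - 3 * α))
            = fun N : ℕ => (N:ℝ) ^ (-(3 * α - 1)) := by
          funext N; rw [neg_sub]
        rw [he]; exact h
      have hev2 : ∀ᶠ N : ℕ in Filter.atTop,
          K * (t - s) ^ (3 * α) * (N:ℝ) ^ (1 - 3 * α) < ε / 3 := by
        have h := hpow.const_mul (K * (t - s) ^ (3 * α))
        rw [mul_zero] at h
        exact h.eventually_lt_const (by linarith)
      obtain ⟨N, hN1, hNδ, hNerr⟩ :=
        ((Filter.eventually_ge_atTop 1).and (hev1.and hev2)).exists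
      have hNpos : (0:ℝ) < (N:ℝ) := by exact_mod_cast Nat.lt_of_lt_of_le Nat.zero_lt_one hN1
      have hNne : (N:ℝ) ≠ 0 := ne_of_gt hNpos
      set Δ : ℝ := (t - s) / (N:ℝ) with hΔdef
      have hΔpos : 0 < Δ := div_pos hts hNpos
      set π : ℕ → ℝ := fun m => s + (m:ℝ) * Δ with hπdef
      have hπ0 : π 0 = s := by simp [hπdef]
      have hNΔ : (N:ℝ) * Δ = t - s := by
        rw [hΔdef]; field_simp
      have hπN : π N = t := by
        simp only [hπdef]; rw [hNΔ]; ring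
      have hstep : ∀ m : ℕ, π (m + 1) - π m = Δ := by
        intro m; simp only [hπdef]; push_cast; ring
      have hmono : ∀ m, m < N → π m < π (m + 1) := by
        intro m _; have h := hstep m; linarith
      have hmesh : ∀ m, m < N → π (m + 1) - π m < δ := by
        intro m _; rw [hstep m]; exact hNδ
      have hπmem : ∀ m, m ≤ N → 0 ≤ π m ∧ π m ≤ t := by
        intro m hm
        have hmΔ : (0:ℝ) ≤ (m:ℝ) * Δ := by positivity
        have hmN : (m:ℝ) ≤ (N:ℝ) := by exact_mod_cast hm
        have h2 : (m:ℝ) * Δ ≤ (N:ℝ) * Δ := by nlinarith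
        constructor
        · simp only [hπdef]; linarith
        · simp only [hπdef]; linarith [hNΔ]
      have hS1 := hpart N π hπ0 hπN hmono hmesh i j
      have hS2 := hpart N π hπ0 hπN hmono hmesh j i
      set S1 := ∑ m ∈ Finset.range N,
          ((Y (π m) i - Y s i) * (Y (π (m + 1)) j - Y (π m) j)
            + ∑ a : Fin d, ∑ b : Fin d,
                Y' (π m) i a * Y' (π m) j b * 𝕏 (π m) (π (m + 1)) a b) with hS1def
      set S2 := ∑ m ∈ Finset.range N,
          ((Y (π m) j - Y s j) * (Y (π (m + 1)) i - Y (π m) i)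
            + ∑ a : Fin d, ∑ b : Fin d,
                Y' (π m) j a * Y' (π m) i b * 𝕏 (π m) (π (m + 1)) a b) with hS2def
      have hterm : ∀ m, m < N →
          ((Y (π m) i - Y s i) * (Y (π (m + 1)) j - Y (π m) j)
            + ∑ a : Fin d, ∑ b : Fin d,
                Y' (π m) i a * Y' (π m) j b * 𝕏 (π m) (π (m + 1)) a b)
          + ((Y (π m) j - Y s j) * (Y (π (m + 1)) i - Y (π m) i)
            + ∑ a : Fin d, ∑ b : Fin d,
                Y' (π m) j a * Y' (π m) i b * 𝕏 (π m) (π (m + 1)) a b)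
          = ((Y (π (m + 1)) i - Y s i) * (Y (π (m + 1)) j - Y s j)
              - (Y (π m) i - Y s i) * (Y (π m) j - Y s j))
            + ((∑ a : Fin d, Y' (π m) i a * (X (π (m + 1)) a - X (π m) a)) *
                  (∑ b : Fin d, Y' (π m) j b * (X (π (m + 1)) b - X (π m) b))
                - (Y (π (m + 1)) i - Y (π m) i) * (Y (π (m + 1)) j - Y (π m) j)) := by
        intro m hm
        have hu0 : 0 ≤ π m := (hπmem m (le_of_lt hm)).1
        have huv : π m ≤ π (m + 1) := (hmono m hm).le
        have hvT : π (m + 1) ≤ T := le_trans (hπmem (m + 1) hm).2 htT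
        have hG : (∑ a : Fin d, ∑ b : Fin d,
                Y' (π m) i a * Y' (π m) j b * 𝕏 (π m) (π (m + 1)) a b)
              + (∑ a : Fin d, ∑ b : Fin d,
                  Y' (π m) j a * Y' (π m) i b * 𝕏 (π m) (π (m + 1)) a b)
            = (∑ a : Fin d, Y' (π m) i a * (X (π (m + 1)) a - X (π m) a)) *
                (∑ b : Fin d, Y' (π m) j b * (X (π (m + 1)) b - X (π m) b)) := by
          have hswap : (∑ a : Fin d, ∑ b : Fin d,
                  Y' (π m) j a * Y' (π m) i b * 𝕏 (π m) (π (m + 1)) a b)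
              = ∑ a : Fin d, ∑ b : Fin d,
                  Y' (π m) i a * Y' (π m) j b * 𝕏 (π m) (π (m + 1)) b a := by
            rw [Finset.sum_comm]
            exact Finset.sum_congr rfl fun a _ => Finset.sum_congr rfl fun b _ => by ring
          rw [hswap, ← Finset.sum_add_distrib, Finset.sum_mul_sum]
          refine Finset.sum_congr rfl fun a _ => ?_
          rw [← Finset.sum_add_distrib]
          refine Finset.sum_congr rfl fun b _ => ?_
          have hg := hgeo a b (π m) (π (m + 1)) hu0 huv hvT
          linear_combination Y' (π m) i a * Y' (π m) j b * hg
        linear_combination hG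
      have htel := Finset.sum_range_sub
        (fun m => (Y (π m) i - Y s i) * (Y (π m) j - Y s j)) N
      have hid : S1 + S2 = Pprod + ∑ m ∈ Finset.range N,
          ((∑ a : Fin d, Y' (π m) i a * (X (π (m + 1)) a - X (π m) a)) *
              (∑ b : Fin d, Y' (π m) j b * (X (π (m + 1)) b - X (π m) b))
            - (Y (π (m + 1)) i - Y (π m) i) * (Y (π (m + 1)) j - Y (π m) j)) := by
        rw [hS1def, hS2def, ← Finset.sum_add_distrib]
        rw [Finset.sum_congr rfl fun m hm => hterm m (Finset.mem_range.mp hm)]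
        rw [Finset.sum_add_distrib]
        rw [htel, hπ0, hπN]
        rw [hPproddef]
        ring
      have hsum : |∑ m ∈ Finset.range N,
          ((∑ a : Fin d, Y' (π m) i a * (X (π (m + 1)) a - X (π m) a)) *
              (∑ b : Fin d, Y' (π m) j b * (X (π (m + 1)) b - X (π m) b))
            - (Y (π (m + 1)) i - Y (π m) i) * (Y (π (m + 1)) j - Y (π m) j))|
          ≤ (N:ℝ) * (K * Δ ^ (3 * α)) := by
        calc |∑ m ∈ Finset.range N,
            ((∑ a : Fin d, Y' (π m) i a * (X (π (m + 1)) a - X (π m) a)) *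
                (∑ b : Fin d, Y' (π m) j b * (X (π (m + 1)) b - X (π m) b))
              - (Y (π (m + 1)) i - Y (π m) i) * (Y (π (m + 1)) j - Y (π m) j))|
            ≤ ∑ m ∈ Finset.range N,
              |(∑ a : Fin d, Y' (π m) i a * (X (π (m + 1)) a - X (π m) a)) *
                  (∑ b : Fin d, Y' (π m) j b * (X (π (m + 1)) b - X (π m) b))
                - (Y (π (m + 1)) i - Y (π m) i) * (Y (π (m + 1)) j - Y (π m) j)| :=
              Finset.abs_sum_le_sum_abs _ _
          _ ≤ ∑ _m ∈ Finset.range N, K * Δ ^ (3 * α) := by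
              refine Finset.sum_le_sum fun m hm => ?_
              have hm' := Finset.mem_range.mp hm
              have h := hKey (π m) (π (m + 1)) (hπmem m hm'.le).1 (hmono m hm')
                (le_trans (hπmem (m + 1) hm').2 htT) i j
              rw [hstep m] at h
              exact h
          _ = (N:ℝ) * (K * Δ ^ (3 * α)) := by
              rw [Finset.sum_const, Finset.card_range, nsmul_eq_mul]
      have hconv : (N:ℝ) * (K * Δ ^ (3 * α)) = K * (t - s) ^ (3 * α) * (N:ℝ) ^ (1 - 3 * α) := by
        rw [hΔdef, Real.div_rpow hts.le (Nat.cast_nonneg N),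
          Real.rpow_sub hNpos, Real.rpow_one]
        have h1 : ((N:ℝ)) ^ (3 * α) ≠ 0 := ne_of_gt (Real.rpow_pos_of_pos hNpos _)
        field_simp
      have herr : |S1 + S2 - Pprod| < ε / 3 := by
        have h : S1 + S2 - Pprod = ∑ m ∈ Finset.range N,
            ((∑ a : Fin d, Y' (π m) i a * (X (π (m + 1)) a - X (π m) a)) *
                (∑ b : Fin d, Y' (π m) j b * (X (π (m + 1)) b - X (π m) b))
              - (Y (π (m + 1)) i - Y (π m) i) * (Y (π (m + 1)) j - Y (π m) j)) := by
          rw [hid]; ring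
        rw [h]
        calc _ ≤ (N:ℝ) * (K * Δ ^ (3 * α)) := hsum
          _ = K * (t - s) ^ (3 * α) * (N:ℝ) ^ (1 - 3 * α) := hconv
          _ < ε / 3 := hNerr
      have hsplit : 𝕐 s t i j + 𝕐 s t j i - Pprod
          = (𝕐 s t i j - S1) + (𝕐 s t j i - S2) + (S1 + S2 - Pprod) := by ring
      rw [hsplit]
      calc |(𝕐 s t i j - S1) + (𝕐 s t j i - S2) + (S1 + S2 - Pprod)|
          ≤ |𝕐 s t i j - S1| + |𝕐 s t j i - S2| + |S1 + S2 - Pprod| := abs_add_three _ _ _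
        _ < ε := by
            rw [abs_sub_comm (𝕐 s t i j) S1, abs_sub_comm (𝕐 s t j i) S2]
            linarith [hS1, hS2, herr]
    by_contra hne
    have h := habs _ (abs_pos.mpr (sub_ne_zero.mpr hne))
    exact lt_irrefl _ h
end
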